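/- arXiv:2010.07082 — 8 statements merged into one kernel-verified Lean document; each statement's English description precedes it below -/
import Mathlib

section
/- Triangle inequality for maxdiff: let x, y, z : I → E have positive support, and suppose IsDiff d₁ x y, IsDiff d₂ y z and IsDiff d₃ x z. Then d₃ ≤ max d₁ d₂. -/
/-- A function `a : I → E` has *positive support* if it is `⊥` on all negative indices. -/
def PosSupport {I E : Type*} [LinearOrder I] [Zero I] [Bot E] (a : I → E) : Prop :=
  ∀ i : I, i < 0 → a i = ⊥

/-- The *write* operation on arrays-as-functions: update at `i` if `0 ≤ i`, else do nothing. -/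
def wr {I E : Type*} [LinearOrder I] [Zero I] [Bot E] (a : I → E) (i : I) (e : E) : I → E :=
  if 0 ≤ i then Function.update a i e else a

/-- `IsDiff d a b` : `d` is the maxdiff of `a` and `b`, i.e. either `a = b` and `d = 0`,
or `d` is the greatest index at which `a` and `b` differ. -/
def IsDiff {I E : Type*} [LinearOrder I] [Zero I] [Bot E] (d : I) (a b : I → E) : Prop :=
  (a = b ∧ d = 0) ∨ (a d ≠ b d ∧ ∀ j : I, d < j → a j = b j)

/-- triangle inequality for maxdiff. -/
theorem isDiff_triangle {I E : Type*} [LinearOrder I] [Zero I] [Bot E]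
    (x y z : I → E) (hx : PosSupport x) (hy : PosSupport y) (hz : PosSupport z)
    {d₁ d₂ d₃ : I} (h₁ : IsDiff d₁ x y) (h₂ : IsDiff d₂ y z) (h₃ : IsDiff d₃ x z) :
    d₃ ≤ max d₁ d₂ := by
  have nonneg : ∀ (d : I) (a b : I → E), PosSupport a → PosSupport b → IsDiff d a b → 0 ≤ d := by
    intro d a b ha hb h
    rcases h with ⟨_, rfl⟩ | ⟨hne, _⟩
    · exact le_refl 0
    · by_contra hlt
      exact hne ((ha d (lt_of_not_ge hlt)).trans (hb d (lt_of_not_ge hlt)).symm)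
  rcases h₃ with ⟨_, rfl⟩ | ⟨hne, _⟩
  · exact le_max_of_le_left (nonneg d₁ x y hx hy h₁)
  · by_contra hgt
    push_neg at hgt
    have hxy : x d₃ = y d₃ := by
      rcases h₁ with ⟨rfl, _⟩ | ⟨_, h⟩
      · rfl
      · exact h d₃ (lt_of_le_of_lt (le_max_left d₁ d₂) hgt)
    have hyz : y d₃ = z d₃ := by
      rcases h₂ with ⟨rfl, _⟩ | ⟨_, h⟩
      · rfl
      · exact h d₃ (lt_of_le_of_lt (le_max_right d₁ d₂) hgt)
    exact hne (hxy.trans hyz)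
end

section
/- Characterization of equality atoms: let a, b : I → E have positive support and suppose IsDiff d a b. Then a = b if and only if d = 0 and a 0 = b 0. -/
/-- characterization of equality atoms. -/
theorem eq_iff_isDiff_zero {I E : Type*} [LinearOrder I] [Zero I] [Bot E]
    (a b : I → E) (ha : PosSupport a) (hb : PosSupport b) {d : I} (h : IsDiff d a b) :
    a = b ↔ d = 0 ∧ a 0 = b 0 := by
  constructor
  · intro hab
    rcases h with ⟨_, hd⟩ | ⟨hne, _⟩
    · exact ⟨hd, by rw [hab]⟩
    · exact absurd (congrFun hab d) hne
  · rintro ⟨hd, h0⟩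
    rcases h with ⟨hab, _⟩ | ⟨hne, _⟩
    · exact hab
    · subst hd; exact absurd h0 hne
end

section
/- Elimination of iterated maxdiffs: let a, b : I → E have positive support, let l ≥ 1, let k₁, …, k_l be indices in I, and define the write sequence b₁ := b and b_{j+1} := wr b_j k_j (a k_j) for 1 ≤ j < l. Then IsDiff k_j a b_j holds for every j = 1, …, l if and only if all of the following five conditions hold: (s0) k₁ ≥ k₂ ≥ … ≥ k_l and 0 ≤ k_l; (s1) for every j < l, if k_j > k_{j+1} then a (k_j) ≠ b (k_j); (s2) for every j < l, if k_j = k_{j+1} then k_j = 0; (s3) for every j ≤ l, if a (k_j) = b (k_j) then k_j = 0; (s4) for every h > k_l, either a h = b h or h = k_j for some j < l. -/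
/-- elimination of iterated maxdiffs.  Here `k j` (for `j < l`) plays the role of
the paper's `k_{j+1}`, and `B j` (with `B 0 = b`, `B (j+1) = wr (B j) (k j) (a (k j))`) plays the
role of the paper's write sequence `b_{j+1}`. -/
theorem iterated_diff_elim {I E : Type*} [LinearOrder I] [Zero I] [Bot E]
    (a b : I → E) (ha : PosSupport a) (hb : PosSupport b)
    (l : ℕ) (hl : 1 ≤ l) (k : ℕ → I) (B : ℕ → I → E)
    (hB0 : B 0 = b) (hBs : ∀ j : ℕ, B (j + 1) = wr (B j) (k j) (a (k j))) :
    (∀ j < l, IsDiff (k j) a (B j)) ↔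
      ((∀ j : ℕ, j + 1 < l → k (j + 1) ≤ k j) ∧ 0 ≤ k (l - 1)) ∧
      (∀ j : ℕ, j + 1 < l → k (j + 1) < k j → a (k j) ≠ b (k j)) ∧
      (∀ j : ℕ, j + 1 < l → k j = k (j + 1) → k j = 0) ∧
      (∀ j < l, a (k j) = b (k j) → k j = 0) ∧
      (∀ h : I, k (l - 1) < h → a h = b h ∨ ∃ j : ℕ, j + 1 < l ∧ h = k j) := by
  classical
  have hBa : ∀ j x, (∃ i, i < j ∧ x = k i ∧ 0 ≤ k i) → B j x = a x := by
    intro j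
    induction j with
    | zero => rintro x ⟨i, hi, _⟩; exact absurd hi (Nat.not_lt_zero i)
    | succ j ih =>
      rintro x ⟨i, hi, hx, h0⟩
      rw [hBs j]
      unfold wr
      split_ifs with h0j
      · by_cases hxk : x = k j
        · subst hxk
          rw [Function.update_self]
        · rw [Function.update_of_ne hxk]
          apply ih
          refine ⟨i, ?_, hx, h0⟩
          rcases Nat.lt_succ_iff_lt_or_eq.mp hi with h | h
          · exact h
          · exact (hxk (h ▸ hx)).elim
      · apply ih
        refine ⟨i, ?_, hx, h0⟩
        rcases Nat.lt_succ_iff_lt_or_eq.mp hi with h | h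
        · exact h
        · exact (h0j (h ▸ h0)).elim
  have hBb : ∀ j x, (∀ i, i < j → 0 ≤ k i → x ≠ k i) → B j x = b x := by
    intro j
    induction j with
    | zero => intro x _; rw [hB0]
    | succ j ih =>
      intro x hx
      rw [hBs j]
      unfold wr
      split_ifs with h0j
      · rw [Function.update_of_ne (hx j (Nat.lt_succ_self j) h0j)]
        exact ih x fun i hi h0 => hx i (hi.trans (Nat.lt_succ_self j)) h0
      · exact ih x fun i hi h0 => hx i (hi.trans (Nat.lt_succ_self j)) h0
  have hBpos : ∀ j, PosSupport (B j) := by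
    intro j x hxneg
    rw [hBb j x fun i _ h0 => ne_of_lt (lt_of_lt_of_le hxneg h0)]
    exact hb x hxneg
  have hBs_ne : ∀ j x, x ≠ k j → B (j + 1) x = B j x := by
    intro j x hx
    rw [hBs j]
    unfold wr
    split_ifs with h
    · exact Function.update_of_ne hx _ _
    · rfl
  have hBs_eq : ∀ j, 0 ≤ k j → B (j + 1) (k j) = a (k j) := by
    intro j h
    rw [hBs j]
    unfold wr
    rw [if_pos h, Function.update_self]
  constructor
  · intro H
    have hk0 : ∀ j, j < l → 0 ≤ k j := by
      intro j hj
      rcases H j hj with ⟨_, h0⟩ | ⟨hne, _⟩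
      · exact h0.ge
      · by_contra hneg
        push_neg at hneg
        exact hne ((ha _ hneg).trans (hBpos j _ hneg).symm)
    have hmono : ∀ j, j + 1 < l → k (j + 1) ≤ k j := by
      intro j hj
      by_contra hlt
      push_neg at hlt
      have h1 : a (k (j + 1)) = B j (k (j + 1)) := by
        rcases H j (by omega) with ⟨heq, _⟩ | ⟨_, hgt⟩
        · rw [heq]
        · exact hgt _ hlt
      have h2 : B (j + 1) (k (j + 1)) = B j (k (j + 1)) := hBs_ne j _ (ne_of_gt hlt)
      rcases H (j + 1) hj with ⟨_, h0⟩ | ⟨hne, _⟩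
      · rw [h0] at hlt
        exact absurd hlt (not_lt.mpr (hk0 j (by omega)))
      · exact hne (h1.trans h2.symm)
    refine ⟨⟨hmono, hk0 (l - 1) (by omega)⟩, ?_, ?_, ?_, ?_⟩
    · intro j hj hlt heq
      rcases H j (by omega) with ⟨_, h0⟩ | ⟨hne, _⟩
      · rw [h0] at hlt
        exact absurd hlt (not_lt.mpr (hk0 (j + 1) hj))
      · by_cases hex : ∃ i, i < j ∧ k j = k i ∧ 0 ≤ k i
        · exact hne (hBa j _ hex).symm
        · push_neg at hex
          exact hne (heq.trans (hBb j _ fun i hi h0 h' => absurd h0 (not_le.mpr (hex i hi h'))).symm)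
    · intro j hj heq
      have h1 : B (j + 1) (k (j + 1)) = a (k (j + 1)) := by
        rw [← heq]
        exact hBs_eq j (hk0 j (by omega))
      rcases H (j + 1) hj with ⟨_, h0⟩ | ⟨hne, _⟩
      · rw [heq]; exact h0
      · exact absurd h1.symm hne
    · intro j hj heq
      rcases H j hj with ⟨_, h0⟩ | ⟨hne, _⟩
      · exact h0
      · by_cases hex : ∃ i, i < j ∧ k j = k i ∧ 0 ≤ k i
        · exact absurd (hBa j _ hex).symm hne
        · push_neg at hex
          exact absurd (heq.trans (hBb j _ fun i hi h0 h' => absurd h0 (not_le.mpr (hex i hi h'))).symm) hne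
    · intro h hh
      have h1 : a h = B (l - 1) h := by
        rcases H (l - 1) (by omega) with ⟨heq, _⟩ | ⟨_, hgt⟩
        · rw [heq]
        · exact hgt h hh
      by_cases hex : ∃ i, i < l - 1 ∧ h = k i ∧ 0 ≤ k i
      · obtain ⟨i, hi, hx, _⟩ := hex
        exact Or.inr ⟨i, by omega, hx⟩
      · push_neg at hex
        exact Or.inl (h1.trans (hBb (l - 1) h fun i hi h0 h' => absurd h0 (not_le.mpr (hex i hi h'))))
  · rintro ⟨⟨hmono, hlast⟩, hs1, hs2, hs3, hs4⟩ j hj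
    have hanti : ∀ j, j < l → ∀ i, i ≤ j → k j ≤ k i := by
      intro j
      induction j with
      | zero =>
        intro _ i hi
        have : i = 0 := Nat.le_zero.mp hi
        rw [this]
      | succ j ih =>
        intro hjl i hi
        by_cases hij : i = j + 1
        · rw [hij]
        · have hi' : i ≤ j := by omega
          exact (hmono j hjl).trans (ih (by omega) i hi')
    have hk0 : ∀ i, i < l → 0 ≤ k i := fun i hi =>
      hlast.trans (hanti (l - 1) (by omega) i (by omega))
    have hgt : ∀ x, k j < x → a x = B j x := by
      intro x hx
      by_cases hex : ∃ i, i < j ∧ x = k i ∧ 0 ≤ k i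
      · exact (hBa j x hex).symm
      · have hex' := hex
        push_neg at hex'
        rw [hBb j x fun i hi h0 h' => absurd h0 (not_le.mpr (hex' i hi h'))]
        rcases hs4 x (lt_of_le_of_lt (hanti (l - 1) (by omega) j (by omega)) hx)
          with hab | ⟨i, hil, hxi⟩
        · exact hab
        · by_cases hij : i < j
          · exact absurd ⟨i, hij, hxi, hk0 i (by omega)⟩ hex
          · have hle : k i ≤ k j := hanti i (by omega) j (by omega)
            rw [hxi] at hx
            exact absurd hx (not_lt.mpr hle)
    by_cases hcase : a (k j) = B j (k j)
    · have hkj0 : k j = 0 := by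
        by_cases hex : ∃ i, i < j ∧ k j = k i ∧ 0 ≤ k i
        · obtain ⟨i, hi, hki, _⟩ := hex
          have h1 : k (i + 1) ≤ k i := hmono i (by omega)
          have h2 : k j ≤ k (i + 1) := hanti j hj (i + 1) (by omega)
          rw [hki] at h2
          have h3 : k i = k (i + 1) := le_antisymm h2 h1
          rw [hki]
          exact hs2 i (by omega) h3
        · push_neg at hex
          have hbval := hBb j (k j) fun i hi h0 h' => absurd h0 (not_le.mpr (hex i hi h'))
          exact hs3 j hj (hcase.trans hbval)
      refine Or.inl ⟨funext fun x => ?_, hkj0⟩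
      rcases lt_trichotomy x (k j) with h | h | h
      · rw [hkj0] at h
        rw [ha x h, hBpos j x h]
      · rw [h]; exact hcase
      · exact hgt x h
    · exact Or.inr ⟨hcase, hgt⟩
end

section
/- Let A be a set of functions I → E all of which have positive support. Then A is closed under writes (for all a ∈ A, i : I, e : E, the function wr a i e belongs to A) if and only if A is closed under cardinality dependence (for all a ∈ A and b : I → E with positive support, if the set {i : I | a i ≠ b i} is finite then b ∈ A). -/
private lemma aux_finset {I E : Type*} [LinearOrder I] [Zero I] [Bot E]
    (A : Set (I → E)) (hwr : ∀ a ∈ A, ∀ (i : I) (e : E), wr a i e ∈ A)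
    (s : Finset I) :
    ∀ a ∈ A, ∀ b : I → E, PosSupport a → PosSupport b →
      {i : I | a i ≠ b i} ⊆ ↑s → b ∈ A := by
  classical
  induction s using Finset.induction_on with
  | empty =>
    intro a ha b _ _ hsub
    have : a = b := by
      funext i
      by_contra h
      simpa using hsub h
    exact this ▸ ha
  | @insert i s hi ih =>
    intro a ha b hpa hpb hsub
    set b' : I → E := Function.update b i (a i) with hb'
    have hpb' : PosSupport b' := by
      intro j hj
      by_cases hji : j = i
      · subst hji; simp [hb', hpa j hj]
      · simp [hb', Function.update_of_ne hji, hpb j hj]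
    have hsub' : {j : I | a j ≠ b' j} ⊆ ↑s := by
      intro j hj
      by_cases hji : j = i
      · exfalso; apply hj; subst hji; simp [hb']
      · have : j ∈ insert i s := hsub (by simpa [hb', Function.update_of_ne hji] using hj)
        simp at this
        tauto
    have hb'A : b' ∈ A := ih a ha b' hpa hpb' hsub'
    by_cases h0 : (0 : I) ≤ i
    · have : wr b' i (b i) = b := by
        funext j
        by_cases hji : j = i
        · subst hji; simp [wr, h0]
        · simp [wr, h0, hb', Function.update_of_ne hji]
      exact this ▸ hwr b' hb'A i (b i)
    · have hneg : i < 0 := lt_of_not_ge h0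
      have : b' = b := by
        funext j
        by_cases hji : j = i
        · subst hji; simp [hb', hpa j hneg, hpb j hneg]
        · simp [hb', Function.update_of_ne hji]
      exact this ▸ hb'A

/-- closure under writes is equivalent to closure under cardinality dependence. -/
theorem closed_wr_iff_closed_cardDep {I E : Type*} [LinearOrder I] [Zero I] [Bot E]
    (A : Set (I → E)) (hA : ∀ a ∈ A, PosSupport a) :
    (∀ a ∈ A, ∀ (i : I) (e : E), wr a i e ∈ A) ↔
      (∀ a ∈ A, ∀ b : I → E, PosSupport b → {i : I | a i ≠ b i}.Finite → b ∈ A) := by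
  classical
  constructor
  · intro hwr a ha b hpb hfin
    exact aux_finset A hwr hfin.toFinset a ha b (hA a ha) hpb (by
      intro j hj; simpa using hj)
  · intro hcd a ha i e
    have hps : PosSupport (wr a i e) := by
      intro j hj
      by_cases h0 : (0 : I) ≤ i
      · by_cases hji : j = i
        · exact absurd (hji ▸ hj) (not_lt.2 (hji ▸ h0))
        · simp [wr, h0, Function.update_of_ne hji, hA a ha j hj]
      · simp [wr, h0, hA a ha j hj]
    apply hcd a ha _ hps
    apply Set.Finite.subset (Set.finite_singleton i)
    intro j hj
    simp only [Set.mem_setOf_eq] at hj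
    by_contra hji
    simp only [Set.mem_singleton_iff] at hji
    apply hj
    by_cases h0 : (0 : I) ≤ i <;> simp [wr, h0, Function.update_of_ne hji]
end

section
/- The minimal functional model is a model of ARD: let A be the set of all functions a : I → E that have positive support and finite support (i.e. a i = ⊥ for all i < 0 and {i : I | a i ≠ ⊥} is finite). Then: (1) the constant function ε := (fun _ => ⊥) belongs to A; (2) A is closed under writes (a ∈ A → wr a i e ∈ A for all i, e); and (3) for all a, b ∈ A there exists d : I with IsDiff d a b. -/
/-- The set of arrays with positive support and finite support: the minimal functional model. -/
def MinA (I E : Type*) [LinearOrder I] [Zero I] [Bot E] : Set (I → E) :=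
  {a : I → E | PosSupport a ∧ {i : I | a i ≠ ⊥}.Finite}

/-- the minimal functional model is a model of ARD. -/
theorem minimal_model_ARD (I E : Type*) [LinearOrder I] [Zero I] [Bot E] :
    ((fun _ : I => (⊥ : E)) ∈ MinA I E) ∧
    (∀ a ∈ MinA I E, ∀ (i : I) (e : E), wr a i e ∈ MinA I E) ∧
    (∀ a ∈ MinA I E, ∀ b ∈ MinA I E, ∃ d : I, IsDiff d a b) := by
  refine ⟨⟨fun i _ => rfl, by simp⟩, ?_, ?_⟩
  · rintro a ⟨hpos, hfin⟩ i e
    unfold wr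
    split_ifs with h
    · refine ⟨fun j hj => ?_, ?_⟩
      · rw [Function.update_of_ne (by rintro rfl; exact absurd h (not_le.2 hj))]
        exact hpos j hj
      · apply Set.Finite.subset (hfin.union (Set.finite_singleton i))
        intro j hj
        by_cases hji : j = i
        · exact Or.inr hji
        · left
          have hj' : Function.update a i e j ≠ ⊥ := hj
          rwa [Function.update_of_ne hji] at hj'
    · exact ⟨hpos, hfin⟩
  · rintro a ⟨hpa, hfa⟩ b ⟨hpb, hfb⟩
    by_cases hab : a = b
    · exact ⟨0, Or.inl ⟨hab, rfl⟩⟩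
    · have hD : {i : I | a i ≠ b i}.Finite := by
        apply Set.Finite.subset (hfa.union hfb)
        intro i hi
        by_cases h : a i = ⊥
        · exact Or.inr (fun hb => hi (h.trans hb.symm))
        · exact Or.inl h
      have hne : {i : I | a i ≠ b i}.Nonempty := by
        by_contra hcon
        rw [Set.not_nonempty_iff_eq_empty, Set.eq_empty_iff_forall_notMem] at hcon
        exact hab (funext fun i => not_not.mp (hcon i))
      obtain ⟨d, hd, hmax⟩ := Set.Finite.exists_maximalFor id _ hD hne
      refine ⟨d, Or.inr ⟨hd, fun j hj => ?_⟩⟩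
      by_contra hne2
      exact (not_le.2 hj) (hmax hne2 hj.le)
end

section
/- Strong amalgamation for linear orders with a distinguished element: let N, M₁, M₂ be linear orders, each with a distinguished element 0_N, 0₁, 0₂ respectively, and let μ₁ : N ↪o M₁ and μ₂ : N ↪o M₂ be order embeddings with μ₁ 0_N = 0₁ and μ₂ 0_N = 0₂. Then there exist a linear order M with a distinguished element 0_M and order embeddings ν₁ : M₁ ↪o M, ν₂ : M₂ ↪o M such that ν₁ 0₁ = 0_M = ν₂ 0₂, ν₁ ∘ μ₁ = ν₂ ∘ μ₂, and whenever ν₁ m₁ = ν₂ m₂ there exists n ∈ N with m₁ = μ₁ n and m₂ = μ₂ n. -/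
universe u

namespace POAmalgAux

variable {N M₁ M₂ : Type u} [LinearOrder N] [LinearOrder M₁] [LinearOrder M₂]
  (μ₁ : N ↪o M₁) (μ₂ : N ↪o M₂)

def Amalg (μ₂ : N ↪o M₂) : Type u := M₁ ⊕ {b : M₂ // b ∉ Set.range ⇑μ₂}

def ale : Amalg (M₁ := M₁) μ₂ → Amalg (M₁ := M₁) μ₂ → Prop
  | Sum.inl a, Sum.inl a' => a ≤ a'
  | Sum.inl a, Sum.inr b => ∀ n, μ₁ n ≤ a → μ₂ n < b.1
  | Sum.inr b, Sum.inl a => ∃ n, b.1 < μ₂ n ∧ μ₁ n ≤ a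
  | Sum.inr b, Sum.inr b' => b.1 ≤ b'.1

lemma ale_refl : ∀ x, ale μ₁ μ₂ x x
  | Sum.inl a => le_refl a
  | Sum.inr b => le_refl b.1

lemma ale_trans : ∀ x y z, ale μ₁ μ₂ x y → ale μ₁ μ₂ y z → ale μ₁ μ₂ x z
  | Sum.inl _, Sum.inl _, Sum.inl _, h, h' => le_trans h h'
  | Sum.inl _, Sum.inl _, Sum.inr _, h, h' => fun n hn => h' n (le_trans hn h)
  | Sum.inl a, Sum.inr b, Sum.inl a', h, h' => by
      obtain ⟨n, hbn, hna⟩ := h'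
      by_contra hc
      exact absurd (h n (le_of_lt (lt_of_le_of_lt hna (lt_of_not_ge hc)))) (not_lt.2 (le_of_lt hbn))
  | Sum.inl _, Sum.inr _, Sum.inr _, h, h' => fun n hn => lt_of_lt_of_le (h n hn) h'
  | Sum.inr _, Sum.inl _, Sum.inl _, h, h' =>
      ⟨h.choose, h.choose_spec.1, le_trans h.choose_spec.2 h'⟩
  | Sum.inr b, Sum.inl a, Sum.inr b', h, h' => by
      obtain ⟨n, hbn, hna⟩ := h
      exact le_of_lt (lt_trans hbn (h' n hna))
  | Sum.inr _, Sum.inr _, Sum.inl _, h, h' => by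
      obtain ⟨n, hbn, hna⟩ := h'
      exact ⟨n, lt_of_le_of_lt h hbn, hna⟩
  | Sum.inr _, Sum.inr _, Sum.inr _, h, h' => le_trans h h'

lemma ale_antisymm : ∀ x y, ale μ₁ μ₂ x y → ale μ₁ μ₂ y x → x = y
  | Sum.inl _, Sum.inl _, h, h' => congrArg Sum.inl (le_antisymm h h')
  | Sum.inl a, Sum.inr b, h, h' => by
      obtain ⟨n, hbn, hna⟩ := h'
      exact absurd (h n hna) (not_lt.2 (le_of_lt hbn))
  | Sum.inr b, Sum.inl a, h, h' => by
      obtain ⟨n, hbn, hna⟩ := h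
      exact absurd (h' n hna) (not_lt.2 (le_of_lt hbn))
  | Sum.inr _, Sum.inr _, h, h' => congrArg Sum.inr (Subtype.ext (le_antisymm h h'))

lemma ale_total : ∀ x y, ale μ₁ μ₂ x y ∨ ale μ₁ μ₂ y x
  | Sum.inl _, Sum.inl _ => le_total _ _
  | Sum.inl a, Sum.inr b => by
      by_cases h : ∃ n, b.1 < μ₂ n ∧ μ₁ n ≤ a
      · exact Or.inr h
      · push_neg at h
        exact Or.inl fun n hn =>
          lt_of_le_of_ne (le_of_not_gt fun hlt => absurd hn (not_le.2 (h n hlt)))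
            (fun e => b.2 ⟨n, e⟩)
  | Sum.inr b, Sum.inl a => by
      by_cases h : ∃ n, b.1 < μ₂ n ∧ μ₁ n ≤ a
      · exact Or.inl h
      · push_neg at h
        exact Or.inr fun n hn =>
          lt_of_le_of_ne (le_of_not_gt fun hlt => absurd hn (not_le.2 (h n hlt)))
            (fun e => b.2 ⟨n, e⟩)
  | Sum.inr _, Sum.inr _ => le_total _ _

noncomputable def amalgLO : LinearOrder (Amalg (M₁ := M₁) μ₂) where
  le := ale μ₁ μ₂
  le_refl := ale_refl μ₁ μ₂
  le_trans := ale_trans μ₁ μ₂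
  le_antisymm := ale_antisymm μ₁ μ₂
  le_total := ale_total μ₁ μ₂
  toDecidableLE := Classical.decRel _

end POAmalgAux

/-- A strong amalgam of two linear orders with a distinguished element over a common one. -/
structure POStrongAmalgam {N M₁ M₂ : Type u} [LinearOrder N] [LinearOrder M₁] [LinearOrder M₂]
    (zN : N) (z₁ : M₁) (z₂ : M₂) (μ₁ : N ↪o M₁) (μ₂ : N ↪o M₂) : Type (u + 1) where
  M : Type u
  [linOrdM : LinearOrder M]
  zM : M
  ν₁ : M₁ ↪o M
  ν₂ : M₂ ↪o M
  map_z₁ : ν₁ z₁ = zM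
  map_z₂ : ν₂ z₂ = zM
  comm : ∀ n : N, ν₁ (μ₁ n) = ν₂ (μ₂ n)
  strong : ∀ (m₁ : M₁) (m₂ : M₂), ν₁ m₁ = ν₂ m₂ → ∃ n : N, m₁ = μ₁ n ∧ m₂ = μ₂ n

open POAmalgAux in
/-- strong amalgamation for linear orders with a distinguished element. -/
theorem strong_amalgamation_pointed_linear_orders
    {N M₁ M₂ : Type u} [LinearOrder N] [LinearOrder M₁] [LinearOrder M₂]
    (zN : N) (z₁ : M₁) (z₂ : M₂) (μ₁ : N ↪o M₁) (μ₂ : N ↪o M₂)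
    (h₁ : μ₁ zN = z₁) (h₂ : μ₂ zN = z₂) :
    Nonempty (POStrongAmalgam zN z₁ z₂ μ₁ μ₂) := by
  classical
  letI lo := amalgLO μ₁ μ₂
  -- ν₂ as a raw map
  let f : M₂ → Amalg (M₁ := M₁) μ₂ := fun b =>
    if h : ∃ n, μ₂ n = b then Sum.inl (μ₁ h.choose) else Sum.inr ⟨b, fun hr => h hr⟩
  have hf_range : ∀ (n : N), f (μ₂ n) = Sum.inl (μ₁ n) := by
    intro n
    have h : ∃ m, μ₂ m = μ₂ n := ⟨n, rfl⟩
    have : h.choose = n := μ₂.injective h.choose_spec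
    simp only [f, dif_pos h, this]
    exact dif_pos h
  have hf_le : ∀ b b', f b ≤ f b' ↔ b ≤ b' := by
    intro b b'
    by_cases hb : ∃ n, μ₂ n = b <;> by_cases hb' : ∃ n, μ₂ n = b'
    · obtain ⟨n, rfl⟩ := hb; obtain ⟨n', rfl⟩ := hb'
      rw [hf_range n, hf_range n']
      show μ₁ n ≤ μ₁ n' ↔ _
      rw [μ₁.le_iff_le, μ₂.le_iff_le]
    · obtain ⟨n, rfl⟩ := hb
      rw [hf_range n]
      rw [show f b' = Sum.inr ⟨b', fun hr => hb' hr⟩ from dif_neg hb']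
      show (∀ m, μ₁ m ≤ μ₁ n → μ₂ m < b') ↔ _
      constructor
      · intro h; exact le_of_lt (h n le_rfl)
      · intro h m hm
        exact lt_of_le_of_lt ((μ₂.le_iff_le).2 ((μ₁.le_iff_le).1 hm))
          (lt_of_le_of_ne h (fun e => hb' ⟨n, e⟩))
    · obtain ⟨n', rfl⟩ := hb'
      rw [hf_range n']
      rw [show f b = Sum.inr ⟨b, fun hr => hb hr⟩ from dif_neg hb]
      show (∃ m, b < μ₂ m ∧ μ₁ m ≤ μ₁ n') ↔ _
      constructor
      · rintro ⟨m, hbm, hm⟩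
        exact le_of_lt (lt_of_lt_of_le hbm ((μ₂.le_iff_le).2 ((μ₁.le_iff_le).1 hm)))
      · intro h
        exact ⟨n', lt_of_le_of_ne h (fun e => hb ⟨n', e.symm⟩), le_rfl⟩
    · rw [show f b = Sum.inr ⟨b, fun hr => hb hr⟩ from dif_neg hb,
        show f b' = Sum.inr ⟨b', fun hr => hb' hr⟩ from dif_neg hb']
      exact Iff.rfl
  refine ⟨⟨Amalg (M₁ := M₁) μ₂, Sum.inl z₁,
    OrderEmbedding.ofMapLEIff Sum.inl (fun a a' => Iff.rfl),
    OrderEmbedding.ofMapLEIff f hf_le, rfl, ?_, ?_, ?_⟩⟩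
  · show f z₂ = Sum.inl z₁
    rw [← h₂, hf_range zN, h₁]
  · intro n
    exact (hf_range n).symm
  · intro m₁ m₂ h
    have h' : Sum.inl m₁ = f m₂ := h
    by_cases hb : ∃ n, μ₂ n = m₂
    · obtain ⟨n, rfl⟩ := hb
      rw [hf_range n] at h'
      exact ⟨n, Sum.inl.inj h', rfl⟩
    · rw [show f m₂ = Sum.inr ⟨m₂, fun hr => hb hr⟩ from dif_neg hb] at h'
      exact absurd h' (by simp)
end

section
/- Amalgamation for ARD over TO (functional models): let N, S₁, S₂ be functional ARD-structures and let μ₁ : N → S₁ and μ₂ : N → S₂ be ARD-embeddings. Then there exist a functional ARD-structure M and ARD-embeddings ν₁ : S₁ → M and ν₂ : S₂ → M such that ν₁ ∘ μ₁ = ν₂ ∘ μ₂ (the index components, the element components, and the array components of the two composites coincide). -/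
universe u v u₁ v₁ u₂ v₂

/-- A functional structure for the theory ARext of arrays with extensionality over the index
theory TO of linear orders with `0`: an index sort `I`, an element sort `E` with `⊥`, and a set
`A` of positive-support arrays containing `ε` and closed under writes. -/
structure FunARext : Type (max (u + 1) (v + 1)) where
  I : Type u
  [linOrdI : LinearOrder I]
  [zeroI : Zero I]
  E : Type v
  [botE : Bot E]
  A : Set (I → E)
  posSupport : ∀ a ∈ A, PosSupport a
  eps_mem : (fun _ : I => (⊥ : E)) ∈ A
  wr_mem : ∀ a ∈ A, ∀ (i : I) (e : E), wr a i e ∈ A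

attribute [instance] FunARext.linOrdI FunARext.zeroI FunARext.botE

/-- A functional structure for the theory ARD of arrays with maxdiff: a functional
ARext-structure in which the maxdiff of any two arrays of `A` is defined. -/
structure FunARD extends FunARext.{u, v} where
  diff_total : ∀ a ∈ A, ∀ b ∈ A, ∃ d : I, IsDiff d a b

/-- An embedding of functional ARext-structures: an order embedding `f` of indexes preserving
`0`, an injective map `g` of elements preserving `⊥`, and a map `h` of arrays mapping `A` into
`A'` and commuting with reads, with `ε`, and with writes. -/
structure ARextEmbedding (S : FunARext.{u₁, v₁}) (T : FunARext.{u₂, v₂}) :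
    Type (max u₁ v₁ u₂ v₂) where
  f : S.I ↪o T.I
  map_zero : f 0 = 0
  g : S.E → T.E
  g_injective : Function.Injective g
  map_bot : g ⊥ = ⊥
  h : (S.I → S.E) → (T.I → T.E)
  h_mem : ∀ a ∈ S.A, h a ∈ T.A
  h_read : ∀ a ∈ S.A, ∀ i : S.I, h a (f i) = g (a i)
  h_eps : h (fun _ : S.I => (⊥ : S.E)) = fun _ : T.I => (⊥ : T.E)
  h_wr : ∀ a ∈ S.A, ∀ (i : S.I) (e : S.E), h (wr a i e) = wr (h a) (f i) (g e)

/-- An embedding is *diff-faithful* if it preserves maxdiffs of arrays of `A`. -/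
def ARextEmbedding.DiffFaithful {S : FunARext.{u₁, v₁}} {T : FunARext.{u₂, v₂}}
    (em : ARextEmbedding S T) : Prop :=
  ∀ a ∈ S.A, ∀ b ∈ S.A, ∀ d : S.I, IsDiff d a b → IsDiff (em.f d) (em.h a) (em.h b)

/-- An embedding of functional ARD-structures: a diff-faithful embedding of the underlying
functional ARext-structures. -/
structure ARDEmbedding (S : FunARD.{u₁, v₁}) (T : FunARD.{u₂, v₂})
    extends ARextEmbedding S.toFunARext T.toFunARext where
  diff_faithful : toARextEmbedding.DiffFaithful

namespace ARDAmalg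
open Classical

section Basics
variable {N S₁ S₂ : FunARD.{u, v}}

/-- Finite modification lemma inside a source structure, with image control. -/
theorem finmod {T : FunARD.{u, v}} (em : ARDEmbedding N T) :
    ∀ (n : ℕ) (a c : N.I → N.E), a ∈ N.A →
      ∀ (hfin : {m | a m ≠ c m}.Finite), hfin.toFinset.card ≤ n →
      (∀ m, m < 0 → c m = a m) →
      c ∈ N.A ∧ ∀ z : T.I, (∀ m, a m ≠ c m → em.f m ≠ z) → em.h c z = em.h a z := by
  intro n
  induction n with
  | zero =>
    intro a c ha hfin hcard _
    have hempty : {m | a m ≠ c m} = ∅ := by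
      have := Finset.card_eq_zero.mp (Nat.le_zero.mp hcard)
      simpa [Set.Finite.toFinset_eq_empty] using this
    have : a = c := by
      funext m
      by_contra hm
      exact absurd (hempty ▸ hm : m ∈ (∅ : Set N.I)) (Set.notMem_empty m)
    subst this
    exact ⟨ha, fun z _ => rfl⟩
  | succ n ih =>
    intro a c ha hfin hcard hneg
    rcases Set.eq_empty_or_nonempty {m | a m ≠ c m} with hD | ⟨m₀, hm₀⟩
    · have : a = c := by
        funext m; by_contra hm
        exact absurd (hD ▸ hm : m ∈ (∅ : Set N.I)) (Set.notMem_empty m)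
      subst this
      exact ⟨ha, fun z _ => rfl⟩
    · have hm₀' : a m₀ ≠ c m₀ := hm₀
      have hm₀0 : (0 : N.I) ≤ m₀ := by
        by_contra h
        exact hm₀' (hneg m₀ (lt_of_not_ge h)).symm
      -- a₁ = wr a m₀ (c m₀)
      set a₁ := wr a m₀ (c m₀) with ha₁def
      have ha₁ : a₁ ∈ N.A := N.wr_mem a ha m₀ (c m₀)
      have ha₁app : ∀ m, a₁ m = if m = m₀ then c m₀ else a m := by
        intro m
        simp [ha₁def, wr, hm₀0, Function.update_apply]
      have hdiffsub : {m | a₁ m ≠ c m} ⊆ {m | a m ≠ c m} \ {m₀} := by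
        intro m hm
        rcases eq_or_ne m m₀ with rfl | hne
        · exact absurd (by rw [ha₁app]; simp) hm
        · refine ⟨?_, hne⟩
          rw [Set.mem_setOf_eq, ha₁app, if_neg hne] at hm
          exact hm
      have hfin1 : {m | a₁ m ≠ c m}.Finite := (hfin.diff (t := {m₀})).subset hdiffsub
      have hcard1 : hfin1.toFinset.card ≤ n := by
        have h1 : hfin1.toFinset ⊆ hfin.toFinset.erase m₀ := by
          intro m hm
          rw [Set.Finite.mem_toFinset] at hm
          have := hdiffsub hm
          rw [Finset.mem_erase, Set.Finite.mem_toFinset]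
          exact ⟨this.2, this.1⟩
        calc hfin1.toFinset.card ≤ (hfin.toFinset.erase m₀).card := Finset.card_le_card h1
          _ ≤ hfin.toFinset.card - 1 := by
              rw [Finset.card_erase_of_mem (by rwa [Set.Finite.mem_toFinset])]
          _ ≤ n := by omega
      have hneg1 : ∀ m, m < 0 → c m = a₁ m := by
        intro m hm
        rw [ha₁app, if_neg (by rintro rfl; exact absurd hm (not_lt.mpr hm₀0)), hneg m hm]
      obtain ⟨hcA, himg⟩ := ih a₁ c ha₁ hfin1 hcard1 hneg1
      refine ⟨hcA, fun z hz => ?_⟩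
      have h₁ : em.h c z = em.h a₁ z := by
        refine himg z fun m hm => ?_
        have hma : a m ≠ c m := by
          rcases eq_or_ne m m₀ with rfl | hne
          · exact hm₀'
          · rwa [ha₁app, if_neg hne] at hm
        exact hz m hma
      have h₂ : em.h a₁ z = em.h a z := by
        rw [ha₁def, em.h_wr a ha m₀ (c m₀)]
        have hzm : em.f m₀ ≠ z := hz m₀ hm₀'
        rw [wr]
        split_ifs with h0
        · rw [Function.update_apply, if_neg (fun h => hzm h.symm)]
        · rfl
      rw [h₁, h₂]


theorem wr_apply {I E : Type*} [LinearOrder I] [Zero I] [Bot E] (a : I → E) (i : I) (e : E)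
    (j : I) : wr a i e j = if 0 ≤ i then (if j = i then e else a j) else a j := by
  by_cases h1 : (0 : I) ≤ i
  · rw [wr, if_pos h1, if_pos h1, Function.update_apply]
  · rw [wr, if_neg h1, if_neg h1]

theorem exists_max_of_finite {α : Type*} [LinearOrder α] {s : Set α} (hfin : s.Finite)
    (hne : s.Nonempty) : ∃ m ∈ s, ∀ z ∈ s, z ≤ m := by
  obtain ⟨m, hm, hmax⟩ := Set.Finite.exists_maximalFor id s hfin hne
  refine ⟨m, hm, fun z hz => ?_⟩
  rcases le_total z m with h | h
  · exact h
  · exact (hmax hz h).ge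


theorem wr_diff_finite {I E : Type*} [LinearOrder I] [Zero I] [Bot E] (a : I → E) (i : I)
    (e : E) : {j | wr a i e j ≠ a j}.Finite := by
  refine (Set.finite_singleton i).subset ?_
  intro j hj
  rw [Set.mem_setOf_eq, wr_apply] at hj
  by_cases h0 : (0 : I) ≤ i
  · rw [if_pos h0] at hj
    by_cases hji : j = i
    · exact hji
    · rw [if_neg hji] at hj
      exact absurd rfl hj
  · rw [if_neg h0] at hj
    exact absurd rfl hj

end Basics

section Constr
variable {N S₁ S₂ : FunARD.{u, v}}

/-- Index amalgam (without cut points): `I₁` plus the new points of `I₂`. -/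
inductive Xt (μ₁ : ARDEmbedding N S₁) (μ₂ : ARDEmbedding N S₂) : Type u where
  | pt : S₁.I → Xt μ₁ μ₂
  | np : {y : S₂.I // y ∉ Set.range ⇑μ₂.f} → Xt μ₁ μ₂

/-- Element amalgam: `E₁` plus the new elements of `E₂`. -/
def Yt (_μ₁ : ARDEmbedding N S₁) (μ₂ : ARDEmbedding N S₂) : Type v :=
  S₁.E ⊕ {e : S₂.E // e ∉ Set.range μ₂.g}

variable (μ₁ : ARDEmbedding N S₁) (μ₂ : ARDEmbedding N S₂)

instance : Bot (Yt μ₁ μ₂) := ⟨Sum.inl ⊥⟩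

theorem Yt_bot_def : (⊥ : Yt μ₁ μ₂) = Sum.inl ⊥ := rfl

/-- The order on the index amalgam. -/
def xle : Xt μ₁ μ₂ → Xt μ₁ μ₂ → Prop
  | .pt x, .pt x' => x ≤ x'
  | .pt x, .np y => ∀ n, μ₁.f n ≤ x → μ₂.f n < y.1
  | .np y, .pt x => ∃ n, y.1 < μ₂.f n ∧ μ₁.f n ≤ x
  | .np y, .np y' => y.1 ≤ y'.1

theorem xle_refl : ∀ q, xle μ₁ μ₂ q q := by
  rintro (x | y) <;> simp [xle]

theorem xle_trans : ∀ p q r, xle μ₁ μ₂ p q → xle μ₁ μ₂ q r → xle μ₁ μ₂ p r := by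
  rintro (x | y) (x' | y') (x'' | y'') h1 h2 <;> simp only [xle] at *
  · exact le_trans h1 h2
  · exact fun n hn => h2 n (le_trans hn h1)
  · by_contra hc
    obtain ⟨n, hn1, hn2⟩ := h2
    exact absurd (h1 n (le_trans hn2 (le_of_not_ge hc))) (not_lt.mpr (le_of_lt hn1))
  · exact fun n hn => lt_of_lt_of_le (h1 n hn) h2
  · obtain ⟨n, hn1, hn2⟩ := h1
    exact ⟨n, hn1, le_trans hn2 h2⟩
  · obtain ⟨n, hn1, hn2⟩ := h1
    exact le_of_lt (lt_trans hn1 (h2 n hn2))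
  · obtain ⟨n, hn1, hn2⟩ := h2
    exact ⟨n, lt_of_le_of_lt h1 hn1, hn2⟩
  · exact le_trans h1 h2

theorem xle_antisymm : ∀ p q, xle μ₁ μ₂ p q → xle μ₁ μ₂ q p → p = q := by
  rintro (x | y) (x' | y') h1 h2 <;> simp only [xle] at *
  · rw [le_antisymm h1 h2]
  · obtain ⟨n, hn1, hn2⟩ := h2
    exact absurd (h1 n hn2) (not_lt.mpr (le_of_lt hn1))
  · obtain ⟨n, hn1, hn2⟩ := h1
    exact absurd (h2 n hn2) (not_lt.mpr (le_of_lt hn1))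
  · rw [Subtype.ext (le_antisymm h1 h2)]

theorem xle_total : ∀ p q, xle μ₁ μ₂ p q ∨ xle μ₁ μ₂ q p := by
  rintro (x | y) (x' | y') <;> simp only [xle]
  · exact le_total x x'
  · by_cases h : ∀ n, μ₁.f n ≤ x → μ₂.f n < y'.1
    · exact Or.inl h
    · push_neg at h
      obtain ⟨n, hn1, hn2⟩ := h
      refine Or.inr ⟨n, lt_of_le_of_ne hn2 ?_, hn1⟩
      intro he
      exact y'.2 ⟨n, he.symm⟩
  · by_cases h : ∀ n, μ₁.f n ≤ x' → μ₂.f n < y.1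
    · exact Or.inr h
    · push_neg at h
      obtain ⟨n, hn1, hn2⟩ := h
      refine Or.inl ⟨n, lt_of_le_of_ne hn2 ?_, hn1⟩
      intro he
      exact y.2 ⟨n, he.symm⟩
  · exact le_total y.1 y'.1

noncomputable instance : LinearOrder (Xt μ₁ μ₂) where
  le := xle μ₁ μ₂
  le_refl := xle_refl μ₁ μ₂
  le_trans := xle_trans μ₁ μ₂
  le_antisymm := xle_antisymm μ₁ μ₂
  le_total := xle_total μ₁ μ₂
  toDecidableLE := fun _ _ => Classical.propDecidable _

instance : Zero (Xt μ₁ μ₂) := ⟨Xt.pt 0⟩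

theorem Xt_zero_def : (0 : Xt μ₁ μ₂) = Xt.pt 0 := rfl

theorem xle_pt_pt {x x' : S₁.I} :
    (Xt.pt x : Xt μ₁ μ₂) ≤ Xt.pt x' ↔ x ≤ x' := Iff.rfl

theorem xlt_pt_pt {x x' : S₁.I} :
    (Xt.pt x : Xt μ₁ μ₂) < Xt.pt x' ↔ x < x' := by
  rw [lt_iff_le_not_ge, lt_iff_le_not_ge]
  exact and_congr (xle_pt_pt μ₁ μ₂) (not_congr (xle_pt_pt μ₁ μ₂))

theorem xle_pt_np {x : S₁.I} {y} :
    (Xt.pt x : Xt μ₁ μ₂) ≤ Xt.np y ↔ ∀ n, μ₁.f n ≤ x → μ₂.f n < y.1 := Iff.rfl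

theorem xle_np_pt {x : S₁.I} {y} :
    (Xt.np y : Xt μ₁ μ₂) ≤ Xt.pt x ↔ ∃ n, y.1 < μ₂.f n ∧ μ₁.f n ≤ x := Iff.rfl

theorem xle_np_np {y y'} :
    (Xt.np y : Xt μ₁ μ₂) ≤ Xt.np y' ↔ y.1 ≤ y'.1 := Iff.rfl

theorem xne_pt_np {x : S₁.I} {y} : (Xt.pt x : Xt μ₁ μ₂) ≠ Xt.np y := by
  intro h; cases h

theorem xlt_iff_not_ge {p q : Xt μ₁ μ₂} (h : p ≠ q) : p < q ↔ ¬ q ≤ p := by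
  constructor
  · exact fun h1 => not_le.mpr h1
  · intro h1
    exact lt_of_le_of_ne ((xle_total μ₁ μ₂ p q).resolve_right h1) h

theorem xlt_pt_np {x : S₁.I} {y} :
    (Xt.pt x : Xt μ₁ μ₂) < Xt.np y ↔ ∀ n, μ₁.f n ≤ x → μ₂.f n < y.1 := by
  rw [xlt_iff_not_ge μ₁ μ₂ (xne_pt_np μ₁ μ₂)]
  constructor
  · intro h n hn
    by_contra hc
    have hy : y.1 < μ₂.f n := lt_of_le_of_ne (not_lt.mp hc)
      (by intro he; exact y.2 ⟨n, he.symm⟩)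
    exact h ((xle_np_pt μ₁ μ₂).mpr ⟨n, hy, hn⟩)
  · intro h hc
    obtain ⟨n, hn1, hn2⟩ := (xle_np_pt μ₁ μ₂).mp hc
    exact absurd (h n hn2) (not_lt.mpr hn1.le)

theorem xlt_np_pt {x : S₁.I} {y} :
    (Xt.np y : Xt μ₁ μ₂) < Xt.pt x ↔ ∃ n, y.1 < μ₂.f n ∧ μ₁.f n ≤ x := by
  rw [xlt_iff_not_ge μ₁ μ₂ (Ne.symm (xne_pt_np μ₁ μ₂))]
  constructor
  · intro h
    by_contra hc
    push_neg at hc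
    refine h ?_
    rw [xle_pt_np]
    intro n hn
    by_contra hc2
    exact absurd hn (not_le.mpr (hc n (lt_of_le_of_ne (not_lt.mp hc2)
      (by intro he; exact y.2 ⟨n, he.symm⟩))))
  · intro h hc
    obtain ⟨n, hn1, hn2⟩ := h
    exact absurd ((xle_pt_np μ₁ μ₂).mp hc n hn2) (not_lt.mpr hn1.le)

theorem xlt_np_np {y y'} :
    (Xt.np y : Xt μ₁ μ₂) < Xt.np y' ↔ y.1 < y'.1 := by
  rw [lt_iff_le_not_ge, lt_iff_le_not_ge]
  exact and_congr (xle_np_np μ₁ μ₂) (not_congr (xle_np_np μ₁ μ₂))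

/-! ### Element map and index map from `S₂` -/

noncomputable def G2 (e : S₂.E) : Yt μ₁ μ₂ :=
  if h : e ∈ Set.range μ₂.g then Sum.inl (μ₁.g h.choose) else Sum.inr ⟨e, h⟩

theorem G2_img (e : N.E) : G2 μ₁ μ₂ (μ₂.g e) = Sum.inl (μ₁.g e) := by
  have h : μ₂.g e ∈ Set.range μ₂.g := ⟨e, rfl⟩
  rw [G2]; erw [dif_pos h]
  congr 1
  exact congrArg μ₁.g (μ₂.g_injective h.choose_spec)

theorem G2_bot : G2 μ₁ μ₂ ⊥ = ⊥ := by
  rw [show (⊥ : S₂.E) = μ₂.g ⊥ from μ₂.map_bot.symm, G2_img, μ₁.map_bot]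
  rfl

theorem G2_inj : Function.Injective (G2 μ₁ μ₂) := by
  intro e e' he
  by_cases h1 : e ∈ Set.range μ₂.g <;> by_cases h2 : e' ∈ Set.range μ₂.g
  · rw [G2, G2] at he; erw [dif_pos h1, dif_pos h2] at he
    rw [← h1.choose_spec, ← h2.choose_spec]
    exact congrArg μ₂.g (μ₁.g_injective (Sum.inl.inj he))
  · rw [G2, G2] at he; erw [dif_pos h1, dif_neg h2] at he
    exact absurd he Sum.inl_ne_inr
  · rw [G2, G2] at he; erw [dif_neg h1, dif_pos h2] at he
    exact absurd he Sum.inr_ne_inl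
  · rw [G2, G2] at he; erw [dif_neg h1, dif_neg h2] at he
    exact congrArg Subtype.val (Sum.inr.inj he)

noncomputable def F2X (i : S₂.I) : Xt μ₁ μ₂ :=
  if h : i ∈ Set.range ⇑μ₂.f then Xt.pt (μ₁.f h.choose) else Xt.np ⟨i, h⟩

theorem F2X_img (n : N.I) : F2X μ₁ μ₂ (μ₂.f n) = Xt.pt (μ₁.f n) := by
  have h : μ₂.f n ∈ Set.range ⇑μ₂.f := ⟨n, rfl⟩
  rw [F2X, dif_pos h]
  congr 1
  exact congrArg μ₁.f (μ₂.f.injective h.choose_spec)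

theorem F2X_np {i : S₂.I} (hi : i ∉ Set.range ⇑μ₂.f) : F2X μ₁ μ₂ i = Xt.np ⟨i, hi⟩ :=
  dif_neg hi

theorem F2X_zero : F2X μ₁ μ₂ 0 = 0 := by
  rw [show (0 : S₂.I) = μ₂.f 0 from μ₂.map_zero.symm, F2X_img, μ₁.map_zero]
  rfl

theorem F2X_le_iff {i j : S₂.I} : F2X μ₁ μ₂ i ≤ F2X μ₁ μ₂ j ↔ i ≤ j := by
  by_cases hi : i ∈ Set.range ⇑μ₂.f <;> by_cases hj : j ∈ Set.range ⇑μ₂.f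
  · obtain ⟨n, rfl⟩ := hi; obtain ⟨m, rfl⟩ := hj
    rw [F2X_img, F2X_img, xle_pt_pt, μ₁.f.le_iff_le, μ₂.f.le_iff_le]
  · obtain ⟨n, rfl⟩ := hi
    rw [F2X_img, F2X_np μ₁ μ₂ hj, xle_pt_np]
    constructor
    · intro h
      exact le_of_lt (h n le_rfl)
    · intro h m hm
      have hmn : m ≤ n := μ₁.f.le_iff_le.mp hm
      exact lt_of_le_of_lt (μ₂.f.le_iff_le.mpr hmn)
        (lt_of_le_of_ne h (fun he => hj ⟨n, he⟩))
  · obtain ⟨m, rfl⟩ := hj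
    rw [F2X_np μ₁ μ₂ hi, F2X_img, xle_np_pt]
    constructor
    · rintro ⟨k, hk1, hk2⟩
      exact le_of_lt (lt_of_lt_of_le hk1 (μ₂.f.le_iff_le.mpr (μ₁.f.le_iff_le.mp hk2)))
    · intro h
      exact ⟨m, lt_of_le_of_ne h (fun he => hi ⟨m, he.symm⟩), le_rfl⟩
  · rw [F2X_np μ₁ μ₂ hi, F2X_np μ₁ μ₂ hj, xle_np_np]

theorem F2X_lt_iff {i j : S₂.I} : F2X μ₁ μ₂ i < F2X μ₁ μ₂ j ↔ i < j := by
  rw [lt_iff_le_not_ge, lt_iff_le_not_ge, F2X_le_iff, F2X_le_iff]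

theorem F2X_inj : Function.Injective (F2X μ₁ μ₂) := by
  intro i j h
  exact le_antisymm ((F2X_le_iff μ₁ μ₂).mp h.le) ((F2X_le_iff μ₁ μ₂).mp h.ge)

/-! ### Values of side-1 arrays at new points of `I₂` -/

def Wit1 (b : S₁.I → S₁.E) (y : S₂.I) : Prop :=
  ∃ p : (N.I → N.E) × S₁.I, p.1 ∈ N.A ∧ (∀ n, μ₁.f n ≤ p.2 → μ₂.f n < y) ∧
    {j | p.2 < j ∧ b j ≠ μ₁.h p.1 j}.Finite

noncomputable def W1 (b : S₁.I → S₁.E) (y : S₂.I) : Yt μ₁ μ₂ :=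
  if h : Wit1 μ₁ μ₂ b y then G2 μ₁ μ₂ (μ₂.h h.choose.1 y) else ⊥

/-- Well-definedness of witness values (allowing the two arrays to differ finitely). -/
theorem wd1 {y : S₂.I} (hy : y ∉ Set.range ⇑μ₂.f) {b b' : S₁.I → S₁.E}
    (hbb' : {j | b j ≠ b' j}.Finite)
    {a : N.I → N.E} {t : S₁.I} (ha : a ∈ N.A) (ht : ∀ n, μ₁.f n ≤ t → μ₂.f n < y)
    (hw : {j | t < j ∧ b j ≠ μ₁.h a j}.Finite)
    {a' : N.I → N.E} {t' : S₁.I} (ha' : a' ∈ N.A) (ht' : ∀ n, μ₁.f n ≤ t' → μ₂.f n < y)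
    (hw' : {j | t' < j ∧ b' j ≠ μ₁.h a' j}.Finite) :
    μ₂.h a y = μ₂.h a' y := by
  set T := max t t' with hTdef
  have hT : ∀ n, μ₁.f n ≤ T → μ₂.f n < y := by
    intro n hn
    rcases le_max_iff.mp hn with h | h
    · exact ht n h
    · exact ht' n h
  set bigJ := ({j | t < j ∧ b j ≠ μ₁.h a j} ∪ {j | t' < j ∧ b' j ≠ μ₁.h a' j})
      ∪ {j | b j ≠ b' j} with hbigJ
  have hbigJfin : bigJ.Finite := ((hw.union hw').union hbb')
  have hDsub : {m | T < μ₁.f m ∧ a m ≠ a' m} ⊆ ⇑μ₁.f ⁻¹' bigJ := by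
    intro m ⟨hm1, hm2⟩
    by_contra hc
    rw [hbigJ] at hc
    simp only [Set.mem_preimage, Set.mem_union, Set.mem_setOf_eq, not_or, not_and, not_not,
      not_lt] at hc
    obtain ⟨⟨hc1, hc2⟩, hc3⟩ := hc
    have ht1 : t < μ₁.f m := lt_of_le_of_lt (le_max_left t t') hm1
    have ht2 : t' < μ₁.f m := lt_of_le_of_lt (le_max_right t t') hm1
    have e1 : b (μ₁.f m) = μ₁.h a (μ₁.f m) := hc1 ht1
    have e2 : b' (μ₁.f m) = μ₁.h a' (μ₁.f m) := hc2 ht2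
    rw [μ₁.h_read a ha m] at e1
    rw [μ₁.h_read a' ha' m] at e2
    exact hm2 (μ₁.g_injective (e1 ▸ e2 ▸ hc3))
  have hDfin : {m | T < μ₁.f m ∧ a m ≠ a' m}.Finite :=
    (hbigJfin.preimage (Set.injOn_of_injective μ₁.f.injective)).subset hDsub
  set c := fun m => if T < μ₁.f m then a' m else a m with hcdef
  have hcapp : ∀ m, c m = if T < μ₁.f m then a' m else a m := fun m => rfl
  have hac : {m | a m ≠ c m} ⊆ {m | T < μ₁.f m ∧ a m ≠ a' m} := by
    intro m hm
    rw [Set.mem_setOf_eq, hcapp m] at hm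
    by_cases hTm : T < μ₁.f m
    · rw [if_pos hTm] at hm
      exact ⟨hTm, hm⟩
    · rw [if_neg hTm] at hm
      exact absurd rfl hm
  have hacfin : {m | a m ≠ c m}.Finite := hDfin.subset hac
  have hneg : ∀ m, m < 0 → c m = a m := by
    intro m hm
    rw [hcapp m]
    by_cases hTm : T < μ₁.f m
    · rw [if_pos hTm, N.posSupport a ha m hm, N.posSupport a' ha' m hm]
    · rw [if_neg hTm]
  obtain ⟨hcA, himg⟩ := finmod μ₂ hacfin.toFinset.card a c ha hacfin le_rfl hneg
  have h1 : μ₂.h c y = μ₂.h a y := himg y (fun m _ he => hy ⟨m, he⟩)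
  have hca' : ∀ m, T < μ₁.f m → c m = a' m := by
    intro m hm
    rw [hcapp m]
    exact if_pos hm
  obtain ⟨d, hd⟩ := N.diff_total c hcA a' ha'
  rcases hd with ⟨heq, _⟩ | ⟨hne, hab⟩
  · rw [← h1, heq]
  · have hdT : μ₁.f d ≤ T := by
      by_contra hc2
      exact hne (hca' d (lt_of_not_ge hc2))
    have h2 : μ₂.f d < y := hT d hdT
    have h3 := μ₂.diff_faithful c hcA a' ha' d (Or.inr ⟨hne, hab⟩)
    rcases h3 with ⟨heq, _⟩ | ⟨_, hab2⟩
    · rw [← h1, congrFun heq y]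
    · rw [← h1, hab2 y h2]

theorem Wit1_mono {b b' : S₁.I → S₁.E} (hbb' : {j | b j ≠ b' j}.Finite) {y : S₂.I} :
    Wit1 μ₁ μ₂ b y → Wit1 μ₁ μ₂ b' y := by
  rintro ⟨p, hp1, hp2, hp3⟩
  refine ⟨p, hp1, hp2, (hp3.union hbb').subset ?_⟩
  intro j ⟨hj1, hj2⟩
  by_cases hbj : b j = b' j
  · exact Or.inl ⟨hj1, hbj ▸ hj2⟩
  · exact Or.inr hbj

theorem ne_symm_finite {α β : Type*} {b b' : α → β} (h : {j | b j ≠ b' j}.Finite) :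
    {j | b' j ≠ b j}.Finite := by
  have : {j | b' j ≠ b j} = {j | b j ≠ b' j} := Set.ext fun j => ne_comm
  rw [this]; exact h

theorem W1_congr {y : S₂.I} (hy : y ∉ Set.range ⇑μ₂.f) {b b' : S₁.I → S₁.E}
    (hbb' : {j | b j ≠ b' j}.Finite) : W1 μ₁ μ₂ b y = W1 μ₁ μ₂ b' y := by
  by_cases h : Wit1 μ₁ μ₂ b y
  · have h' : Wit1 μ₁ μ₂ b' y := Wit1_mono μ₁ μ₂ hbb' h
    rw [W1, W1]; erw [dif_pos h, dif_pos h']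
    exact congrArg (G2 μ₁ μ₂) (wd1 μ₁ μ₂ hy hbb' h.choose_spec.1 h.choose_spec.2.1
      h.choose_spec.2.2 h'.choose_spec.1 h'.choose_spec.2.1 h'.choose_spec.2.2)
  · have h' : ¬ Wit1 μ₁ μ₂ b' y := fun hw => h (Wit1_mono μ₁ μ₂ (ne_symm_finite hbb') hw)
    rw [W1, W1]; erw [dif_neg h, dif_neg h']

theorem empty_diff_finite {α β : Type*} (b : α → β) : {j | b j ≠ b j}.Finite := by
  have : {j | b j ≠ b j} = ∅ := by ext j; simp
  rw [this]; exact Set.finite_empty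

theorem Wit1_shift {b b' : S₁.I → S₁.E} {d : S₁.I} (hagree : ∀ j, d < j → b j = b' j)
    {y : S₂.I} (hdy : ∀ n, μ₁.f n ≤ d → μ₂.f n < y) :
    Wit1 μ₁ μ₂ b y → Wit1 μ₁ μ₂ b' y := by
  rintro ⟨⟨a, t⟩, hp1, hp2, hp3⟩
  refine ⟨⟨a, max t d⟩, hp1, ?_, hp3.subset ?_⟩
  · intro n hn
    rcases le_max_iff.mp hn with h | h
    · exact hp2 n h
    · exact hdy n h
  · intro j ⟨hj1, hj2⟩
    have h1 : t < j := lt_of_le_of_lt (le_max_left t d) hj1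
    have h2 : d < j := lt_of_le_of_lt (le_max_right t d) hj1
    exact ⟨h1, (hagree j h2) ▸ hj2⟩

theorem W1_transfer {y : S₂.I} (hy : y ∉ Set.range ⇑μ₂.f) {b b' : S₁.I → S₁.E} {d : S₁.I}
    (hagree : ∀ j, d < j → b j = b' j) (hdy : ∀ n, μ₁.f n ≤ d → μ₂.f n < y) :
    W1 μ₁ μ₂ b y = W1 μ₁ μ₂ b' y := by
  have hagree' : ∀ j, d < j → b' j = b j := fun j hj => (hagree j hj).symm
  by_cases h : Wit1 μ₁ μ₂ b y
  · have h' : Wit1 μ₁ μ₂ b' y := Wit1_shift μ₁ μ₂ hagree hdy h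
    rw [W1, W1]; erw [dif_pos h, dif_pos h']
    -- (h.choose.1, max h.choose.2 d) is a witness for b' as well
    obtain ⟨hc1, hc2, hc3⟩ := h.choose_spec
    have hwb' : {j | max h.choose.2 d < j ∧ b' j ≠ μ₁.h h.choose.1 j}.Finite := by
      refine hc3.subset ?_
      intro j ⟨hj1, hj2⟩
      exact ⟨lt_of_le_of_lt (le_max_left _ d) hj1,
        (hagree j (lt_of_le_of_lt (le_max_right _ d) hj1)) ▸ hj2⟩
    have hclt : ∀ n, μ₁.f n ≤ max h.choose.2 d → μ₂.f n < y := by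
      intro n hn
      rcases le_max_iff.mp hn with hh | hh
      · exact hc2 n hh
      · exact hdy n hh
    exact congrArg (G2 μ₁ μ₂) (wd1 μ₁ μ₂ hy (empty_diff_finite b') hc1 hclt hwb'
      h'.choose_spec.1 h'.choose_spec.2.1 h'.choose_spec.2.2)
  · have h' : ¬ Wit1 μ₁ μ₂ b' y := fun hw => h (Wit1_shift μ₁ μ₂ hagree' hdy hw)
    rw [W1, W1]; erw [dif_neg h, dif_neg h']

theorem W1_img {y : S₂.I} (hy : y ∉ Set.range ⇑μ₂.f) {a : N.I → N.E} (ha : a ∈ N.A) :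
    W1 μ₁ μ₂ (μ₁.h a) y = G2 μ₁ μ₂ (μ₂.h a y) := by
  by_cases h : Wit1 μ₁ μ₂ (μ₁.h a) y
  · rw [W1]; erw [dif_pos h]
    refine congrArg (G2 μ₁ μ₂) (wd1 μ₁ μ₂ hy (empty_diff_finite (μ₁.h a)) h.choose_spec.1
      h.choose_spec.2.1 h.choose_spec.2.2 ha h.choose_spec.2.1 ?_)
    refine Set.finite_empty.subset ?_
    intro j ⟨_, hj⟩
    exact absurd rfl hj
  · rw [W1]; erw [dif_neg h]
    have hclt : ¬ (∀ n, μ₁.f n ≤ 0 → μ₂.f n < y) := by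
      intro hclt
      refine h ⟨⟨a, 0⟩, ha, hclt, ?_⟩
      refine Set.finite_empty.subset ?_
      intro j ⟨_, hj⟩
      exact absurd rfl hj
    push_neg at hclt
    obtain ⟨n, hn0, hny⟩ := hclt
    have hn0' : n ≤ 0 := μ₁.f.le_iff_le.mp (by rw [μ₁.map_zero]; exact hn0)
    have hy0 : y < 0 := by
      have h1 : y ≤ μ₂.f n := hny
      have h2 : y ≠ μ₂.f n := fun he => hy ⟨n, he.symm⟩
      calc y < μ₂.f n := lt_of_le_of_ne h1 h2
        _ ≤ μ₂.f 0 := μ₂.f.le_iff_le.mpr hn0'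
        _ = 0 := μ₂.map_zero
    rw [S₂.posSupport (μ₂.h a) (μ₂.h_mem a ha) y hy0, G2_bot]

theorem W1_pos {y : S₂.I} (hy0 : y < 0) (b : S₁.I → S₁.E) : W1 μ₁ μ₂ b y = ⊥ := by
  by_cases h : Wit1 μ₁ μ₂ b y
  · rw [W1]; erw [dif_pos h]
    rw [S₂.posSupport _ (μ₂.h_mem _ h.choose_spec.1) y hy0, G2_bot]
  · rw [W1]; erw [dif_neg h]

/-! ### Values of side-2 arrays at new points of `I₁` -/

def Wit2 (b : S₂.I → S₂.E) (x : S₁.I) : Prop :=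
  ∃ p : (N.I → N.E) × S₂.I, p.1 ∈ N.A ∧ (∀ n, μ₂.f n ≤ p.2 → μ₁.f n < x) ∧
    {j | p.2 < j ∧ b j ≠ μ₂.h p.1 j}.Finite

noncomputable def W2 (b : S₂.I → S₂.E) (x : S₁.I) : Yt μ₁ μ₂ :=
  if h : Wit2 μ₁ μ₂ b x then Sum.inl (μ₁.h h.choose.1 x) else ⊥

theorem wd2 {x : S₁.I} (hx : x ∉ Set.range ⇑μ₁.f) {b b' : S₂.I → S₂.E}
    (hbb' : {j | b j ≠ b' j}.Finite)
    {a : N.I → N.E} {t : S₂.I} (ha : a ∈ N.A) (ht : ∀ n, μ₂.f n ≤ t → μ₁.f n < x)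
    (hw : {j | t < j ∧ b j ≠ μ₂.h a j}.Finite)
    {a' : N.I → N.E} {t' : S₂.I} (ha' : a' ∈ N.A) (ht' : ∀ n, μ₂.f n ≤ t' → μ₁.f n < x)
    (hw' : {j | t' < j ∧ b' j ≠ μ₂.h a' j}.Finite) :
    μ₁.h a x = μ₁.h a' x := by
  set T := max t t' with hTdef
  have hT : ∀ n, μ₂.f n ≤ T → μ₁.f n < x := by
    intro n hn
    rcases le_max_iff.mp hn with h | h
    · exact ht n h
    · exact ht' n h
  set bigJ := ({j | t < j ∧ b j ≠ μ₂.h a j} ∪ {j | t' < j ∧ b' j ≠ μ₂.h a' j})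
      ∪ {j | b j ≠ b' j} with hbigJ
  have hbigJfin : bigJ.Finite := ((hw.union hw').union hbb')
  have hDsub : {m | T < μ₂.f m ∧ a m ≠ a' m} ⊆ ⇑μ₂.f ⁻¹' bigJ := by
    intro m ⟨hm1, hm2⟩
    by_contra hc
    rw [hbigJ] at hc
    simp only [Set.mem_preimage, Set.mem_union, Set.mem_setOf_eq, not_or, not_and, not_not,
      not_lt] at hc
    obtain ⟨⟨hc1, hc2⟩, hc3⟩ := hc
    have ht1 : t < μ₂.f m := lt_of_le_of_lt (le_max_left t t') hm1
    have ht2 : t' < μ₂.f m := lt_of_le_of_lt (le_max_right t t') hm1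
    have e1 : b (μ₂.f m) = μ₂.h a (μ₂.f m) := hc1 ht1
    have e2 : b' (μ₂.f m) = μ₂.h a' (μ₂.f m) := hc2 ht2
    rw [μ₂.h_read a ha m] at e1
    rw [μ₂.h_read a' ha' m] at e2
    exact hm2 (μ₂.g_injective (e1 ▸ e2 ▸ hc3))
  have hDfin : {m | T < μ₂.f m ∧ a m ≠ a' m}.Finite :=
    (hbigJfin.preimage (Set.injOn_of_injective μ₂.f.injective)).subset hDsub
  set c := fun m => if T < μ₂.f m then a' m else a m with hcdef
  have hcapp : ∀ m, c m = if T < μ₂.f m then a' m else a m := fun m => rfl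
  have hac : {m | a m ≠ c m} ⊆ {m | T < μ₂.f m ∧ a m ≠ a' m} := by
    intro m hm
    rw [Set.mem_setOf_eq, hcapp m] at hm
    by_cases hTm : T < μ₂.f m
    · rw [if_pos hTm] at hm
      exact ⟨hTm, hm⟩
    · rw [if_neg hTm] at hm
      exact absurd rfl hm
  have hacfin : {m | a m ≠ c m}.Finite := hDfin.subset hac
  have hneg : ∀ m, m < 0 → c m = a m := by
    intro m hm
    rw [hcapp m]
    by_cases hTm : T < μ₂.f m
    · rw [if_pos hTm, N.posSupport a ha m hm, N.posSupport a' ha' m hm]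
    · rw [if_neg hTm]
  obtain ⟨hcA, himg⟩ := finmod μ₁ hacfin.toFinset.card a c ha hacfin le_rfl hneg
  have h1 : μ₁.h c x = μ₁.h a x := himg x (fun m _ he => hx ⟨m, he⟩)
  have hca' : ∀ m, T < μ₂.f m → c m = a' m := by
    intro m hm
    rw [hcapp m]
    exact if_pos hm
  obtain ⟨d, hd⟩ := N.diff_total c hcA a' ha'
  rcases hd with ⟨heq, _⟩ | ⟨hne, hab⟩
  · rw [← h1, heq]
  · have hdT : μ₂.f d ≤ T := by
      by_contra hc2
      exact hne (hca' d (lt_of_not_ge hc2))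
    have h2 : μ₁.f d < x := hT d hdT
    have h3 := μ₁.diff_faithful c hcA a' ha' d (Or.inr ⟨hne, hab⟩)
    rcases h3 with ⟨heq, _⟩ | ⟨_, hab2⟩
    · rw [← h1, congrFun heq x]
    · rw [← h1, hab2 x h2]

theorem Wit2_mono {b b' : S₂.I → S₂.E} (hbb' : {j | b j ≠ b' j}.Finite) {x : S₁.I} :
    Wit2 μ₁ μ₂ b x → Wit2 μ₁ μ₂ b' x := by
  rintro ⟨p, hp1, hp2, hp3⟩
  refine ⟨p, hp1, hp2, (hp3.union hbb').subset ?_⟩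
  intro j ⟨hj1, hj2⟩
  by_cases hbj : b j = b' j
  · exact Or.inl ⟨hj1, hbj ▸ hj2⟩
  · exact Or.inr hbj

theorem W2_congr {x : S₁.I} (hx : x ∉ Set.range ⇑μ₁.f) {b b' : S₂.I → S₂.E}
    (hbb' : {j | b j ≠ b' j}.Finite) : W2 μ₁ μ₂ b x = W2 μ₁ μ₂ b' x := by
  by_cases h : Wit2 μ₁ μ₂ b x
  · have h' : Wit2 μ₁ μ₂ b' x := Wit2_mono μ₁ μ₂ hbb' h
    rw [W2, W2]; erw [dif_pos h, dif_pos h']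
    exact congrArg Sum.inl (wd2 μ₁ μ₂ hx hbb' h.choose_spec.1 h.choose_spec.2.1
      h.choose_spec.2.2 h'.choose_spec.1 h'.choose_spec.2.1 h'.choose_spec.2.2)
  · have h' : ¬ Wit2 μ₁ μ₂ b' x := fun hw => h (Wit2_mono μ₁ μ₂ (ne_symm_finite hbb') hw)
    rw [W2, W2]; erw [dif_neg h, dif_neg h']

theorem Wit2_shift {b b' : S₂.I → S₂.E} {d : S₂.I} (hagree : ∀ j, d < j → b j = b' j)
    {x : S₁.I} (hdx : ∀ n, μ₂.f n ≤ d → μ₁.f n < x) :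
    Wit2 μ₁ μ₂ b x → Wit2 μ₁ μ₂ b' x := by
  rintro ⟨⟨a, t⟩, hp1, hp2, hp3⟩
  refine ⟨⟨a, max t d⟩, hp1, ?_, hp3.subset ?_⟩
  · intro n hn
    rcases le_max_iff.mp hn with h | h
    · exact hp2 n h
    · exact hdx n h
  · intro j ⟨hj1, hj2⟩
    have h1 : t < j := lt_of_le_of_lt (le_max_left t d) hj1
    have h2 : d < j := lt_of_le_of_lt (le_max_right t d) hj1
    exact ⟨h1, (hagree j h2) ▸ hj2⟩

theorem W2_transfer {x : S₁.I} (hx : x ∉ Set.range ⇑μ₁.f) {b b' : S₂.I → S₂.E} {d : S₂.I}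
    (hagree : ∀ j, d < j → b j = b' j) (hdx : ∀ n, μ₂.f n ≤ d → μ₁.f n < x) :
    W2 μ₁ μ₂ b x = W2 μ₁ μ₂ b' x := by
  have hagree' : ∀ j, d < j → b' j = b j := fun j hj => (hagree j hj).symm
  by_cases h : Wit2 μ₁ μ₂ b x
  · have h' : Wit2 μ₁ μ₂ b' x := Wit2_shift μ₁ μ₂ hagree hdx h
    rw [W2, W2]; erw [dif_pos h, dif_pos h']
    obtain ⟨hc1, hc2, hc3⟩ := h.choose_spec
    have hwb' : {j | max h.choose.2 d < j ∧ b' j ≠ μ₂.h h.choose.1 j}.Finite := by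
      refine hc3.subset ?_
      intro j ⟨hj1, hj2⟩
      exact ⟨lt_of_le_of_lt (le_max_left _ d) hj1,
        (hagree j (lt_of_le_of_lt (le_max_right _ d) hj1)) ▸ hj2⟩
    have hclt : ∀ n, μ₂.f n ≤ max h.choose.2 d → μ₁.f n < x := by
      intro n hn
      rcases le_max_iff.mp hn with hh | hh
      · exact hc2 n hh
      · exact hdx n hh
    exact congrArg Sum.inl (wd2 μ₁ μ₂ hx (empty_diff_finite b') hc1 hclt hwb'
      h'.choose_spec.1 h'.choose_spec.2.1 h'.choose_spec.2.2)
  · have h' : ¬ Wit2 μ₁ μ₂ b' x := fun hw => h (Wit2_shift μ₁ μ₂ hagree' hdx hw)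
    rw [W2, W2]; erw [dif_neg h, dif_neg h']

theorem W2_img {x : S₁.I} (hx : x ∉ Set.range ⇑μ₁.f) {a : N.I → N.E} (ha : a ∈ N.A) :
    W2 μ₁ μ₂ (μ₂.h a) x = Sum.inl (μ₁.h a x) := by
  by_cases h : Wit2 μ₁ μ₂ (μ₂.h a) x
  · rw [W2]; erw [dif_pos h]
    refine congrArg Sum.inl (wd2 μ₁ μ₂ hx (empty_diff_finite (μ₂.h a)) h.choose_spec.1
      h.choose_spec.2.1 h.choose_spec.2.2 ha h.choose_spec.2.1 ?_)
    refine Set.finite_empty.subset ?_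
    intro j ⟨_, hj⟩
    exact absurd rfl hj
  · rw [W2]; erw [dif_neg h]
    have hclt : ¬ (∀ n, μ₂.f n ≤ 0 → μ₁.f n < x) := by
      intro hclt
      refine h ⟨⟨a, 0⟩, ha, hclt, ?_⟩
      refine Set.finite_empty.subset ?_
      intro j ⟨_, hj⟩
      exact absurd rfl hj
    push_neg at hclt
    obtain ⟨n, hn0, hnx⟩ := hclt
    have hn0' : n ≤ 0 := μ₂.f.le_iff_le.mp (by rw [μ₂.map_zero]; exact hn0)
    have hx0 : x < 0 := by
      have h2 : x ≠ μ₁.f n := fun he => hx ⟨n, he.symm⟩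
      calc x < μ₁.f n := lt_of_le_of_ne hnx h2
        _ ≤ μ₁.f 0 := μ₁.f.le_iff_le.mpr hn0'
        _ = 0 := μ₁.map_zero
    rw [S₁.posSupport (μ₁.h a) (μ₁.h_mem a ha) x hx0]
    rfl

theorem W2_pos {x : S₁.I} (hx0 : x < 0) (b : S₂.I → S₂.E) : W2 μ₁ μ₂ b x = ⊥ := by
  by_cases h : Wit2 μ₁ μ₂ b x
  · rw [W2]; erw [dif_pos h]
    rw [S₁.posSupport _ (μ₁.h_mem _ h.choose_spec.1) x hx0]
    rfl
  · rw [W2]; erw [dif_neg h]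

/-! ### The two array maps into functions on `Xt` -/

noncomputable def H1 (b : S₁.I → S₁.E) : Xt μ₁ μ₂ → Yt μ₁ μ₂
  | .pt x => Sum.inl (b x)
  | .np y => W1 μ₁ μ₂ b y.1

noncomputable def H2 (b : S₂.I → S₂.E) : Xt μ₁ μ₂ → Yt μ₁ μ₂
  | .pt x => if h : x ∈ Set.range ⇑μ₁.f then G2 μ₁ μ₂ (b (μ₂.f h.choose))
             else W2 μ₁ μ₂ b x
  | .np y => G2 μ₁ μ₂ (b y.1)

theorem H1_pt (b : S₁.I → S₁.E) (x : S₁.I) : H1 μ₁ μ₂ b (.pt x) = Sum.inl (b x) := rfl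

theorem H1_np (b : S₁.I → S₁.E) (y) : H1 μ₁ μ₂ b (.np y) = W1 μ₁ μ₂ b y.1 := rfl

theorem H2_np (b : S₂.I → S₂.E) (y) : H2 μ₁ μ₂ b (.np y) = G2 μ₁ μ₂ (b y.1) := rfl

theorem H2_pt_range (b : S₂.I → S₂.E) (n : N.I) :
    H2 μ₁ μ₂ b (.pt (μ₁.f n)) = G2 μ₁ μ₂ (b (μ₂.f n)) := by
  have h : μ₁.f n ∈ Set.range ⇑μ₁.f := ⟨n, rfl⟩
  show (if h : μ₁.f n ∈ Set.range ⇑μ₁.f then G2 μ₁ μ₂ (b (μ₂.f h.choose))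
    else W2 μ₁ μ₂ b (μ₁.f n)) = _
  rw [dif_pos h]
  congr 3
  exact μ₁.f.injective h.choose_spec

theorem H2_pt_nr (b : S₂.I → S₂.E) {x : S₁.I} (hx : x ∉ Set.range ⇑μ₁.f) :
    H2 μ₁ μ₂ b (.pt x) = W2 μ₁ μ₂ b x := by
  show (if h : x ∈ Set.range ⇑μ₁.f then G2 μ₁ μ₂ (b (μ₂.f h.choose))
    else W2 μ₁ μ₂ b x) = _
  rw [dif_neg hx]

theorem H2_read (b : S₂.I → S₂.E) (i : S₂.I) :
    H2 μ₁ μ₂ b (F2X μ₁ μ₂ i) = G2 μ₁ μ₂ (b i) := by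
  by_cases hi : i ∈ Set.range ⇑μ₂.f
  · obtain ⟨n, rfl⟩ := hi
    rw [F2X_img, H2_pt_range]
  · rw [F2X_np μ₁ μ₂ hi, H2_np]

theorem H_compat {a : N.I → N.E} (ha : a ∈ N.A) :
    H1 μ₁ μ₂ (μ₁.h a) = H2 μ₁ μ₂ (μ₂.h a) := by
  funext q
  match q with
  | .pt x =>
    by_cases hx : x ∈ Set.range ⇑μ₁.f
    · obtain ⟨n, rfl⟩ := hx
      rw [H1_pt, H2_pt_range, μ₁.h_read a ha n, μ₂.h_read a ha n, G2_img]
    · rw [H1_pt, H2_pt_nr μ₁ μ₂ _ hx, W2_img μ₁ μ₂ hx ha]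
  | .np y =>
    rw [H1_np, H2_np, W1_img μ₁ μ₂ y.2 ha]

theorem H1_eps : H1 μ₁ μ₂ (fun _ => ⊥) = fun _ => ⊥ := by
  funext q
  match q with
  | .pt x => rfl
  | .np y =>
    rw [H1_np, ← μ₁.h_eps, W1_img μ₁ μ₂ y.2 N.eps_mem, μ₂.h_eps, G2_bot]

theorem H2_eps : H2 μ₁ μ₂ (fun _ => ⊥) = fun _ => ⊥ := by
  funext q
  match q with
  | .pt x =>
    by_cases hx : x ∈ Set.range ⇑μ₁.f
    · obtain ⟨n, rfl⟩ := hx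
      rw [H2_pt_range, G2_bot]
    · rw [H2_pt_nr μ₁ μ₂ _ hx, ← μ₂.h_eps, W2_img μ₁ μ₂ hx N.eps_mem, μ₁.h_eps]
      rfl
  | .np y => rw [H2_np, G2_bot]

theorem np_lt_zero {y} (hq : (Xt.np y : Xt μ₁ μ₂) < 0) : y.1 < 0 := by
  rw [Xt_zero_def] at hq
  obtain ⟨n, hy1, hn0⟩ := (xlt_np_pt μ₁ μ₂).mp hq
  have hn0' : n ≤ 0 := μ₁.f.le_iff_le.mp (by rw [μ₁.map_zero]; exact hn0)
  calc y.1 < μ₂.f n := hy1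
    _ ≤ μ₂.f 0 := μ₂.f.le_iff_le.mpr hn0'
    _ = 0 := μ₂.map_zero

theorem H1_pos {b : S₁.I → S₁.E} (hb : b ∈ S₁.A) {q : Xt μ₁ μ₂} (hq : q < 0) :
    H1 μ₁ μ₂ b q = ⊥ := by
  match q with
  | .pt x =>
    rw [Xt_zero_def] at hq
    rw [H1_pt, S₁.posSupport b hb x ((xlt_pt_pt μ₁ μ₂).mp hq)]
    rfl
  | .np y =>
    rw [H1_np, W1_pos μ₁ μ₂ (np_lt_zero μ₁ μ₂ hq) b]

theorem H2_pos {b : S₂.I → S₂.E} (hb : b ∈ S₂.A) {q : Xt μ₁ μ₂} (hq : q < 0) :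
    H2 μ₁ μ₂ b q = ⊥ := by
  match q with
  | .pt x =>
    rw [Xt_zero_def] at hq
    have hx0 : x < 0 := (xlt_pt_pt μ₁ μ₂).mp hq
    by_cases hx : x ∈ Set.range ⇑μ₁.f
    · obtain ⟨n, rfl⟩ := hx
      have hn0 : n < 0 := by
        have := (μ₁.f.lt_iff_lt (a := n) (b := 0)).mp (by rwa [μ₁.map_zero])
        exact this
      have : μ₂.f n < 0 := by
        rw [← μ₂.map_zero]
        exact (μ₂.f.lt_iff_lt).mpr hn0
      rw [H2_pt_range, S₂.posSupport b hb _ this, G2_bot]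
    · rw [H2_pt_nr μ₁ μ₂ _ hx, W2_pos μ₁ μ₂ hx0 b]
  | .np y =>
    rw [H2_np, S₂.posSupport b hb _ (np_lt_zero μ₁ μ₂ hq), G2_bot]

theorem finite_single_diff (b : S₁.I → S₁.E) (i : S₁.I) (e : S₁.E) :
    {j | Function.update b i e j ≠ b j}.Finite := by
  refine (Set.finite_singleton i).subset ?_
  intro j hj
  rw [Set.mem_setOf_eq, Function.update_apply] at hj
  by_cases hji : j = i
  · exact hji
  · rw [if_neg hji] at hj
    exact absurd rfl hj

theorem finite_single_diff₂ (b : S₂.I → S₂.E) (i : S₂.I) (e : S₂.E) :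
    {j | Function.update b i e j ≠ b j}.Finite := by
  refine (Set.finite_singleton i).subset ?_
  intro j hj
  rw [Set.mem_setOf_eq, Function.update_apply] at hj
  by_cases hji : j = i
  · exact hji
  · rw [if_neg hji] at hj
    exact absurd rfl hj

theorem zero_le_pt_iff {i : S₁.I} : (0 : Xt μ₁ μ₂) ≤ .pt i ↔ (0 : S₁.I) ≤ i := Iff.rfl

theorem zero_le_F2X_iff {i : S₂.I} : (0 : Xt μ₁ μ₂) ≤ F2X μ₁ μ₂ i ↔ (0 : S₂.I) ≤ i := by
  rw [← F2X_zero μ₁ μ₂, F2X_le_iff]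

theorem H1_wr (b : S₁.I → S₁.E) (i : S₁.I) (e : S₁.E) :
    H1 μ₁ μ₂ (wr b i e) = wr (H1 μ₁ μ₂ b) (.pt i) (Sum.inl e) := by
  by_cases h0 : (0 : S₁.I) ≤ i
  · erw [wr, wr, if_pos h0, if_pos ((zero_le_pt_iff μ₁ μ₂).mpr h0)]
    funext q
    match q with
    | .pt x =>
      rw [H1_pt]; erw [Function.update_apply, Function.update_apply]
      by_cases hxi : x = i
      · erw [if_pos hxi, if_pos (by rw [hxi])]
      · erw [if_neg hxi, if_neg (by intro hc; exact hxi (by cases hc; rfl))]; rw [H1_pt]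
    | .np y =>
      rw [H1_np]; erw [Function.update_of_ne (show (Xt.np y : Xt μ₁ μ₂) ≠ Xt.pt i by intro hc; cases hc)]; rw [H1_np]
      exact W1_congr μ₁ μ₂ y.2 (finite_single_diff b i e)
  · erw [wr, wr, if_neg h0, if_neg (fun hc => h0 ((zero_le_pt_iff μ₁ μ₂).mp hc))]

theorem H2_wr (b : S₂.I → S₂.E) (i : S₂.I) (e : S₂.E) :
    H2 μ₁ μ₂ (wr b i e) = wr (H2 μ₁ μ₂ b) (F2X μ₁ μ₂ i) (G2 μ₁ μ₂ e) := by
  by_cases h0 : (0 : S₂.I) ≤ i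
  · rw [wr, wr, if_pos h0, if_pos ((zero_le_F2X_iff μ₁ μ₂).mpr h0)]
    funext q
    match q with
    | .pt x =>
      by_cases hx : x ∈ Set.range ⇑μ₁.f
      · obtain ⟨n, rfl⟩ := hx
        rw [H2_pt_range, Function.update_apply, Function.update_apply]
        by_cases hin : μ₂.f n = i
        · rw [if_pos hin, if_pos (by rw [← hin, F2X_img])]
        · rw [if_neg hin, if_neg ?_, H2_pt_range]
          intro hc
          have : F2X μ₁ μ₂ (μ₂.f n) = F2X μ₁ μ₂ i := by rw [F2X_img]; exact hc
          exact hin (F2X_inj μ₁ μ₂ this)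
      · rw [H2_pt_nr μ₁ μ₂ _ hx, Function.update_of_ne ?_, H2_pt_nr μ₁ μ₂ _ hx]
        · exact W2_congr μ₁ μ₂ hx (finite_single_diff₂ b i e)
        · intro hc
          by_cases hi : i ∈ Set.range ⇑μ₂.f
          · obtain ⟨m, rfl⟩ := hi
            rw [F2X_img] at hc
            exact hx ⟨m, by cases hc; rfl⟩
          · rw [F2X_np μ₁ μ₂ hi] at hc
            cases hc
    | .np y =>
      rw [H2_np, Function.update_apply, Function.update_apply]
      by_cases hyi : y.1 = i
      · have hi : i ∉ Set.range ⇑μ₂.f := hyi ▸ y.2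
        have hnp : Xt.np y = F2X μ₁ μ₂ i := by
          rw [F2X_np μ₁ μ₂ hi]
          congr 1
          exact Subtype.ext hyi
        rw [if_pos hyi, if_pos hnp]
      · rw [if_neg hyi, if_neg ?_, H2_np]
        intro hc
        by_cases hi : i ∈ Set.range ⇑μ₂.f
        · obtain ⟨m, rfl⟩ := hi
          rw [F2X_img] at hc
          cases hc
        · rw [F2X_np μ₁ μ₂ hi] at hc
          cases hc
          exact hyi rfl
  · rw [wr, wr, if_neg h0, if_neg (fun hc => h0 ((zero_le_F2X_iff μ₁ μ₂).mp hc))]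

/-! ### Faithfulness at the `Xt` level -/

theorem H1_above {b b' : S₁.I → S₁.E} {d : S₁.I}
    (hab : ∀ j, d < j → b j = b' j) :
    ∀ q : Xt μ₁ μ₂, .pt d < q → H1 μ₁ μ₂ b q = H1 μ₁ μ₂ b' q := by
  intro q hq
  match q with
  | .pt j =>
    rw [H1_pt, H1_pt, hab j ((xlt_pt_pt μ₁ μ₂).mp hq)]
  | .np y =>
    rw [H1_np, H1_np]
    exact W1_transfer μ₁ μ₂ y.2 hab ((xlt_pt_np μ₁ μ₂).mp hq)

theorem H2_above {b b' : S₂.I → S₂.E} {d : S₂.I}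
    (hab : ∀ j, d < j → b j = b' j) :
    ∀ q : Xt μ₁ μ₂, F2X μ₁ μ₂ d < q → H2 μ₁ μ₂ b q = H2 μ₁ μ₂ b' q := by
  intro q hq
  match q with
  | .pt x =>
    by_cases hx : x ∈ Set.range ⇑μ₁.f
    · obtain ⟨n, rfl⟩ := hx
      have : d < μ₂.f n := by
        rw [show (Xt.pt (μ₁.f n) : Xt μ₁ μ₂) = F2X μ₁ μ₂ (μ₂.f n) from (F2X_img μ₁ μ₂ n).symm]
          at hq
        exact (F2X_lt_iff μ₁ μ₂).mp hq
      rw [H2_pt_range, H2_pt_range, hab _ this]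
    · rw [H2_pt_nr μ₁ μ₂ _ hx, H2_pt_nr μ₁ μ₂ _ hx]
      refine W2_transfer μ₁ μ₂ hx hab ?_
      intro n hn
      by_cases hd : d ∈ Set.range ⇑μ₂.f
      · obtain ⟨m, rfl⟩ := hd
        rw [F2X_img] at hq
        have hnm : n ≤ m := μ₂.f.le_iff_le.mp hn
        exact lt_of_le_of_lt (μ₁.f.le_iff_le.mpr hnm) ((xlt_pt_pt μ₁ μ₂).mp hq)
      · rw [F2X_np μ₁ μ₂ hd] at hq
        obtain ⟨k, hk1, hk2⟩ := (xlt_np_pt μ₁ μ₂).mp hq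
        have hnk : n < k := μ₂.f.lt_iff_lt.mp (lt_of_le_of_lt hn hk1)
        exact lt_of_lt_of_le (μ₁.f.lt_iff_lt.mpr hnk) hk2
  | .np y =>
    have : d < y.1 := by
      rw [show (Xt.np y : Xt μ₁ μ₂) = F2X μ₁ μ₂ y.1 by rw [F2X_np μ₁ μ₂ y.2]] at hq
      exact (F2X_lt_iff μ₁ μ₂).mp hq
    rw [H2_np, H2_np, hab _ this]

/-! ### Cut points and the full index sort -/

def CutS : Type u :=
  {S : Set (Xt μ₁ μ₂) // S.Nonempty ∧ (∀ ⦃x y⦄, y ∈ S → x ≤ y → x ∈ S) ∧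
    ∀ x ∈ S, ∃ y ∈ S, x < y}

theorem cut_lt {S : CutS μ₁ μ₂} {x x' : Xt μ₁ μ₂} (hx : x ∈ S.1) (hx' : x' ∉ S.1) :
    x < x' := by
  by_contra hc
  exact hx' (S.2.2.1 hx (le_of_not_gt hc))

theorem cut_total (S S' : CutS μ₁ μ₂) : S.1 ⊆ S'.1 ∨ S'.1 ⊆ S.1 := by
  by_cases h : S.1 ⊆ S'.1
  · exact Or.inl h
  · rw [Set.not_subset] at h
    obtain ⟨s, hs, hs'⟩ := h
    refine Or.inr fun z hz => ?_
    exact S.2.2.1 hs (le_of_lt (cut_lt μ₁ μ₂ hz hs'))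

noncomputable instance : LinearOrder (Xt μ₁ μ₂ → Yt μ₁ μ₂) :=
  IsWellOrder.linearOrder WellOrderingRel

/-- The amalgamated index sort: points of `Xt` plus, for every proper cut, a family of
κ-points indexed by array germs (with infinitely many copies, reverse-ordered). -/
inductive IMt (μ₁ : ARDEmbedding N S₁) (μ₂ : ARDEmbedding N S₂) : Type (max u v) where
  | pt : Xt μ₁ μ₂ → IMt μ₁ μ₂
  | kp : CutS μ₁ μ₂ → (Xt μ₁ μ₂ → Yt μ₁ μ₂) → ℕ → IMt μ₁ μ₂

def imle : IMt μ₁ μ₂ → IMt μ₁ μ₂ → Prop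
  | .pt x, .pt x' => x ≤ x'
  | .pt x, .kp S _ _ => x ∈ S.1
  | .kp S _ _, .pt x => x ∉ S.1
  | .kp S g n, .kp S' g' n' => S.1 ⊂ S'.1 ∨ (S = S' ∧ (g < g' ∨ (g = g' ∧ n' ≤ n)))

theorem imle_refl : ∀ q, imle μ₁ μ₂ q q := by
  rintro (x | ⟨S, g, n⟩)
  · exact le_refl x
  · exact Or.inr ⟨rfl, Or.inr ⟨rfl, le_refl n⟩⟩

theorem imle_trans : ∀ p q r, imle μ₁ μ₂ p q → imle μ₁ μ₂ q r → imle μ₁ μ₂ p r := by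
  rintro (x | ⟨S, g, n⟩) (x' | ⟨S', g', n'⟩) (x'' | ⟨S'', g'', n''⟩) h1 h2 <;>
    simp only [imle] at *
  · exact le_trans h1 h2
  · exact S''.2.2.1 h2 h1
  · exact le_of_lt (cut_lt μ₁ μ₂ h1 h2)
  · rcases h2 with h2 | ⟨rfl, _⟩
    · exact h2.1 h1
    · exact h1
  · intro hc
    exact h1 (S.2.2.1 hc h2)
  · have hsub : S.1 ⊆ S''.1 := fun z hz => S''.2.2.1 h2 (le_of_lt (cut_lt μ₁ μ₂ hz h1))
    exact Or.inl ⟨hsub, fun hsub' => h1 (hsub' h2)⟩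
  · rcases h1 with h1 | ⟨rfl, _⟩
    · exact fun hc => h2 (h1.1 hc)
    · exact h2
  · rcases h1 with h1 | ⟨rfl, hg1⟩
    · rcases h2 with h2 | ⟨rfl, _⟩
      · exact Or.inl (ssubset_trans h1 h2)
      · exact Or.inl h1
    · rcases h2 with h2 | ⟨rfl, hg2⟩
      · exact Or.inl h2
      · refine Or.inr ⟨rfl, ?_⟩
        rcases hg1 with hg1 | ⟨rfl, hn1⟩
        · rcases hg2 with hg2 | ⟨rfl, _⟩
          · exact Or.inl (lt_trans hg1 hg2)
          · exact Or.inl hg1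
        · rcases hg2 with hg2 | ⟨rfl, hn2⟩
          · exact Or.inl hg2
          · exact Or.inr ⟨rfl, le_trans hn2 hn1⟩

theorem imle_antisymm : ∀ p q, imle μ₁ μ₂ p q → imle μ₁ μ₂ q p → p = q := by
  rintro (x | ⟨S, g, n⟩) (x' | ⟨S', g', n'⟩) h1 h2 <;> simp only [imle] at *
  · rw [le_antisymm h1 h2]
  · exact absurd h1 h2
  · exact absurd h2 h1
  · rcases h1 with h1 | ⟨rfl, hg1⟩
    · rcases h2 with h2 | ⟨he, _⟩
      · exact absurd h1 (asymm h2)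
      · rw [he] at h1
        exact absurd h1 (lt_irrefl _)
    · rcases h2 with h2 | ⟨_, hg2⟩
      · exact absurd h2 (lt_irrefl _)
      · rcases hg1 with hg1 | ⟨rfl, hn1⟩
        · rcases hg2 with hg2 | ⟨he, _⟩
          · exact absurd hg1 (asymm hg2)
          · rw [he] at hg1
            exact absurd hg1 (lt_irrefl _)
        · rcases hg2 with hg2 | ⟨_, hn2⟩
          · exact absurd hg2 (lt_irrefl _)
          · rw [le_antisymm hn2 hn1]

theorem imle_total : ∀ p q, imle μ₁ μ₂ p q ∨ imle μ₁ μ₂ q p := by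
  rintro (x | ⟨S, g, n⟩) (x' | ⟨S', g', n'⟩) <;> simp only [imle]
  · exact le_total x x'
  · exact Classical.em _
  · exact (Classical.em _).symm
  · by_cases he : S.1 = S'.1
    · have heq : S = S' := Subtype.ext he
      subst heq
      rcases lt_trichotomy g g' with hg | rfl | hg
      · exact Or.inl (Or.inr ⟨rfl, Or.inl hg⟩)
      · rcases le_total n' n with hn | hn
        · exact Or.inl (Or.inr ⟨rfl, Or.inr ⟨rfl, hn⟩⟩)
        · exact Or.inr (Or.inr ⟨rfl, Or.inr ⟨rfl, hn⟩⟩)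
      · exact Or.inr (Or.inr ⟨rfl, Or.inl hg⟩)
    · rcases cut_total μ₁ μ₂ S S' with h | h
      · exact Or.inl (Or.inl ⟨h, fun hc => he (le_antisymm h hc)⟩)
      · exact Or.inr (Or.inl ⟨h, fun hc => he (le_antisymm hc h)⟩)

noncomputable instance : LinearOrder (IMt μ₁ μ₂) where
  le := imle μ₁ μ₂
  le_refl := imle_refl μ₁ μ₂
  le_trans := imle_trans μ₁ μ₂
  le_antisymm := imle_antisymm μ₁ μ₂
  le_total := imle_total μ₁ μ₂
  toDecidableLE := fun _ _ => Classical.propDecidable _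

instance : Zero (IMt μ₁ μ₂) := ⟨IMt.pt 0⟩

theorem IMt_zero_def : (0 : IMt μ₁ μ₂) = IMt.pt 0 := rfl

theorem imle_pt_pt {x x' : Xt μ₁ μ₂} : (IMt.pt x : IMt μ₁ μ₂) ≤ .pt x' ↔ x ≤ x' := Iff.rfl

theorem imlt_pt_pt {x x' : Xt μ₁ μ₂} : (IMt.pt x : IMt μ₁ μ₂) < .pt x' ↔ x < x' := by
  rw [lt_iff_le_not_ge, lt_iff_le_not_ge]
  exact and_congr (imle_pt_pt μ₁ μ₂) (not_congr (imle_pt_pt μ₁ μ₂))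

theorem imlt_pt_kp {x : Xt μ₁ μ₂} {S g n} :
    (IMt.pt x : IMt μ₁ μ₂) < .kp S g n ↔ x ∈ S.1 := by
  rw [lt_iff_le_not_ge]
  constructor
  · exact fun h => h.1
  · intro h
    exact ⟨h, fun hc => (hc : x ∉ S.1) h⟩

theorem zero_le_ptpt_iff {x : Xt μ₁ μ₂} :
    (0 : IMt μ₁ μ₂) ≤ .pt x ↔ (0 : Xt μ₁ μ₂) ≤ x := Iff.rfl

theorem imlt_kp_pt {x : Xt μ₁ μ₂} {S g n} :
    (IMt.kp S g n : IMt μ₁ μ₂) < .pt x ↔ x ∉ S.1 := by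
  rw [lt_iff_le_not_ge]
  constructor
  · exact fun h => h.1
  · intro h
    exact ⟨h, fun hc => h (hc : x ∈ S.1)⟩

/-! ### Germs at cuts -/

def botf : Xt μ₁ μ₂ → Yt μ₁ μ₂ := fun _ => ⊥

def EvEq (S : CutS μ₁ μ₂) (u v : Xt μ₁ μ₂ → Yt μ₁ μ₂) : Prop :=
  ∃ q ∈ S.1, ∀ x ∈ S.1, q < x → u x = v x

theorem EvEq.refl' (S : CutS μ₁ μ₂) (u) : EvEq μ₁ μ₂ S u u :=
  ⟨S.2.1.choose, S.2.1.choose_spec, fun _ _ _ => rfl⟩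

theorem EvEq.symm' {S : CutS μ₁ μ₂} {u v} (h : EvEq μ₁ μ₂ S u v) : EvEq μ₁ μ₂ S v u := by
  obtain ⟨q, hq, h⟩ := h
  exact ⟨q, hq, fun x hx hqx => (h x hx hqx).symm⟩

theorem EvEq.trans' {S : CutS μ₁ μ₂} {u v w} (h1 : EvEq μ₁ μ₂ S u v)
    (h2 : EvEq μ₁ μ₂ S v w) : EvEq μ₁ μ₂ S u w := by
  obtain ⟨q, hq, h1⟩ := h1
  obtain ⟨q', hq', h2⟩ := h2
  refine ⟨max q q', ?_, fun x hx hqx => ?_⟩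
  · rcases max_choice q q' with h | h <;> rw [h]
    · exact hq
    · exact hq'
  · have e1 := h1 x hx (lt_of_le_of_lt (le_max_left q q') hqx)
    have e2 := h2 x hx (lt_of_le_of_lt (le_max_right q q') hqx)
    rw [e1, e2]

def evSetoid (S : CutS μ₁ μ₂) : Setoid (Xt μ₁ μ₂ → Yt μ₁ μ₂) :=
  ⟨EvEq μ₁ μ₂ S, fun u => EvEq.refl' μ₁ μ₂ S u, EvEq.symm' μ₁ μ₂, EvEq.trans' μ₁ μ₂⟩

noncomputable def grep (S : CutS μ₁ μ₂) (u : Xt μ₁ μ₂ → Yt μ₁ μ₂) :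
    Xt μ₁ μ₂ → Yt μ₁ μ₂ :=
  (Quotient.mk (evSetoid μ₁ μ₂ S) u).out

theorem grep_eq_of {S : CutS μ₁ μ₂} {u v} (h : EvEq μ₁ μ₂ S u v) :
    grep μ₁ μ₂ S u = grep μ₁ μ₂ S v :=
  congrArg Quotient.out (Quotient.sound h)

theorem evEq_of_grep_eq {S : CutS μ₁ μ₂} {u v} (h : grep μ₁ μ₂ S u = grep μ₁ μ₂ S v) :
    EvEq μ₁ μ₂ S u v := by
  have h1 : (Quotient.mk (evSetoid μ₁ μ₂ S) u) = Quotient.mk (evSetoid μ₁ μ₂ S) v := by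
    rw [← Quotient.out_eq (Quotient.mk (evSetoid μ₁ μ₂ S) u),
      ← Quotient.out_eq (Quotient.mk (evSetoid μ₁ μ₂ S) v)]
    exact congrArg _ h
  exact Quotient.exact h1

noncomputable def mark : Yt μ₁ μ₂ :=
  if h : ∃ v : Yt μ₁ μ₂, v ≠ ⊥ then h.choose else ⊥

theorem mark_ne (h : ∃ v : Yt μ₁ μ₂, v ≠ ⊥) : mark μ₁ μ₂ ≠ ⊥ := by
  rw [mark, dif_pos h]
  exact h.choose_spec

noncomputable def Kval (S : CutS μ₁ μ₂) (g u : Xt μ₁ μ₂ → Yt μ₁ μ₂) : Yt μ₁ μ₂ :=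
  if grep μ₁ μ₂ S u = g ∧ ¬ EvEq μ₁ μ₂ S u (botf μ₁ μ₂) then mark μ₁ μ₂ else ⊥

theorem Kval_congr {S : CutS μ₁ μ₂} {u u'} (h : EvEq μ₁ μ₂ S u u') (g) :
    Kval μ₁ μ₂ S g u = Kval μ₁ μ₂ S g u' := by
  rw [Kval, Kval]
  refine if_congr (and_congr ?_ (not_congr ?_)) rfl rfl
  · rw [grep_eq_of μ₁ μ₂ h]
  · exact ⟨fun hb => (h.symm' μ₁ μ₂).trans' μ₁ μ₂ hb,
      fun hb => (EvEq.trans' μ₁ μ₂) h hb⟩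

theorem germ_fin (S : CutS μ₁ μ₂) {u u'} (hfin : {x | u x ≠ u' x}.Finite) :
    EvEq μ₁ μ₂ S u u' := by
  set T := {x ∈ S.1 | u x ≠ u' x} with hT
  have hTfin : T.Finite := hfin.subset (fun x hx => hx.2)
  rcases T.eq_empty_or_nonempty with hTe | hTne
  · refine ⟨S.2.1.choose, S.2.1.choose_spec, fun x hx _ => ?_⟩
    by_contra hc
    exact absurd (hTe ▸ (⟨hx, hc⟩ : x ∈ T)) (Set.notMem_empty x)
  · obtain ⟨m, hm, hmax⟩ := Set.Finite.exists_maximalFor id T hTfin hTne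
    obtain ⟨q, hq, hmq⟩ := S.2.2.2 m hm.1
    refine ⟨q, hq, fun x hx hqx => ?_⟩
    by_contra hc
    have hxT : x ∈ T := ⟨hx, hc⟩
    rcases le_total x m with h | h
    · exact absurd (lt_trans hmq hqx) (not_lt.mpr h)
    · have : m = x := le_antisymm h (hmax hxT h)
      subst this
      exact absurd hqx (not_lt.mpr (le_of_lt hmq))

/-- Extension of an `Xt`-array to the κ-points. -/
noncomputable def Hhat (u : Xt μ₁ μ₂ → Yt μ₁ μ₂) : IMt μ₁ μ₂ → Yt μ₁ μ₂
  | .pt x => u x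
  | .kp S g _ => Kval μ₁ μ₂ S g u

theorem Hhat_pt (u) (x : Xt μ₁ μ₂) : Hhat μ₁ μ₂ u (.pt x) = u x := rfl

theorem Hhat_kp (u) {S g n} : Hhat μ₁ μ₂ u (.kp S g n) = Kval μ₁ μ₂ S g u := rfl

/-! ### The amalgamated structure -/

def AM : Set (IMt μ₁ μ₂ → Yt μ₁ μ₂) :=
  {c | ∃ u : Xt μ₁ μ₂ → Yt μ₁ μ₂,
    ((∃ b ∈ S₁.A, u = H1 μ₁ μ₂ b) ∨ (∃ b ∈ S₂.A, u = H2 μ₁ μ₂ b)) ∧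
    {p | c p ≠ Hhat μ₁ μ₂ u p}.Finite ∧ ∀ p, c p ≠ Hhat μ₁ μ₂ u p → ¬ p < 0}

theorem base_pos {u : Xt μ₁ μ₂ → Yt μ₁ μ₂}
    (hub : (∃ b ∈ S₁.A, u = H1 μ₁ μ₂ b) ∨ (∃ b ∈ S₂.A, u = H2 μ₁ μ₂ b))
    {q : Xt μ₁ μ₂} (hq : q < 0) : u q = ⊥ := by
  rcases hub with ⟨b, hb, rfl⟩ | ⟨b, hb, rfl⟩
  · exact H1_pos μ₁ μ₂ hb hq
  · exact H2_pos μ₁ μ₂ hb hq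

theorem Hhat_base_pos {u : Xt μ₁ μ₂ → Yt μ₁ μ₂}
    (hub : (∃ b ∈ S₁.A, u = H1 μ₁ μ₂ b) ∨ (∃ b ∈ S₂.A, u = H2 μ₁ μ₂ b)) :
    ∀ p : IMt μ₁ μ₂, p < 0 → Hhat μ₁ μ₂ u p = ⊥ := by
  intro p hp
  match p with
  | .pt x =>
    rw [IMt_zero_def] at hp
    exact base_pos μ₁ μ₂ hub ((imlt_pt_pt μ₁ μ₂).mp hp)
  | .kp S g n =>
    rw [IMt_zero_def] at hp
    have h0 : (0 : Xt μ₁ μ₂) ∉ S.1 := (imlt_kp_pt μ₁ μ₂).mp hp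
    have hbot : EvEq μ₁ μ₂ S u (botf μ₁ μ₂) := by
      refine ⟨S.2.1.choose, S.2.1.choose_spec, fun x hx _ => ?_⟩
      exact base_pos μ₁ μ₂ hub (cut_lt μ₁ μ₂ hx h0)
    rw [Hhat_kp, Kval, if_neg (fun hcond => hcond.2 hbot)]

theorem AM_posSupport : ∀ c ∈ AM μ₁ μ₂, ∀ p : IMt μ₁ μ₂, p < 0 → c p = ⊥ := by
  rintro c ⟨u, hub, _, hupos⟩ p hp
  have h1 : c p = Hhat μ₁ μ₂ u p := by
    by_contra hc
    exact hupos p hc hp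
  rw [h1, Hhat_base_pos μ₁ μ₂ hub p hp]

theorem Hhat_botf : Hhat μ₁ μ₂ (botf μ₁ μ₂) = fun _ => ⊥ := by
  funext p
  match p with
  | .pt x => rfl
  | .kp S g n =>
    rw [Hhat_kp, Kval, if_neg (fun hcond => hcond.2 (EvEq.refl' μ₁ μ₂ S _))]

theorem AM_eps : (fun _ : IMt μ₁ μ₂ => (⊥ : Yt μ₁ μ₂)) ∈ AM μ₁ μ₂ := by
  refine ⟨H1 μ₁ μ₂ (fun _ => ⊥), Or.inl ⟨_, S₁.eps_mem, rfl⟩, ?_, ?_⟩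
  · have : {p : IMt μ₁ μ₂ | (⊥ : Yt μ₁ μ₂) ≠ Hhat μ₁ μ₂ (H1 μ₁ μ₂ (fun _ => ⊥)) p} = ∅ := by
      ext p
      simp only [Set.mem_setOf_eq, Set.mem_empty_iff_false, iff_false, not_not]
      rw [show H1 μ₁ μ₂ (fun _ => ⊥) = botf μ₁ μ₂ from H1_eps μ₁ μ₂, Hhat_botf]
    rw [this]
    exact Set.finite_empty
  · intro p hp
    exfalso
    apply hp
    rw [show H1 μ₁ μ₂ (fun _ => ⊥) = botf μ₁ μ₂ from H1_eps μ₁ μ₂, Hhat_botf]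

theorem AM_wr : ∀ c ∈ AM μ₁ μ₂, ∀ (p : IMt μ₁ μ₂) (v : Yt μ₁ μ₂), wr c p v ∈ AM μ₁ μ₂ := by
  rintro c ⟨u, hub, hufin, hupos⟩ p v
  by_cases h0 : (0 : IMt μ₁ μ₂) ≤ p
  · refine ⟨u, hub, ?_, ?_⟩
    · refine (hufin.union (Set.finite_singleton p)).subset ?_
      intro q hq
      rw [Set.mem_setOf_eq, wr_apply, if_pos h0] at hq
      by_cases hqp : q = p
      · exact Or.inr hqp
      · rw [if_neg hqp] at hq
        exact Or.inl hq
    · intro q hq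
      rw [wr_apply, if_pos h0] at hq
      by_cases hqp : q = p
      · subst hqp
        exact not_lt.mpr h0
      · rw [if_neg hqp] at hq
        exact hupos q hq
  · have : wr c p v = c := by rw [wr, if_neg h0]
    rw [this]
    exact ⟨u, hub, hufin, hupos⟩

/-- Every pair of arrays of the amalgam has a maxdiff. -/
theorem AM_diff : ∀ c ∈ AM μ₁ μ₂, ∀ c' ∈ AM μ₁ μ₂, ∃ d : IMt μ₁ μ₂, IsDiff d c c' := by
  rintro c ⟨u, hub, hufin, _⟩ c' ⟨u', hub', hufin', _⟩
  by_cases hcc : c = c'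
  · exact ⟨0, Or.inl ⟨hcc, rfl⟩⟩
  -- notations
  set DX := {x : Xt μ₁ μ₂ | c (.pt x) ≠ c' (.pt x)} with hDXdef
  set FS := ({p | c p ≠ Hhat μ₁ μ₂ u p} ∪ {p | c' p ≠ Hhat μ₁ μ₂ u' p} :
    Set (IMt μ₁ μ₂)) with hFSdef
  have hFSfin : FS.Finite := hufin.union hufin'
  have hFSeq : ∀ p ∉ FS, c p = Hhat μ₁ μ₂ u p ∧ c' p = Hhat μ₁ μ₂ u' p := by
    intro p hp
    rw [hFSdef, Set.mem_union] at hp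
    push_neg at hp
    exact ⟨not_not.mp hp.1, not_not.mp hp.2⟩
  set TX := {x : Xt μ₁ μ₂ | (IMt.pt x : IMt μ₁ μ₂) ∈ FS} with hTXdef
  have hTXfin : TX.Finite := by
    have : TX = (fun x : Xt μ₁ μ₂ => (IMt.pt x : IMt μ₁ μ₂)) ⁻¹' FS := rfl
    rw [this]
    exact hFSfin.preimage (Set.injOn_of_injective (fun a b h => by injection h))
  -- the key germ-agreement lemma
  have key : ∀ S : CutS μ₁ μ₂, (∃ q0 ∈ S.1, ∀ x ∈ S.1, q0 < x → x ∉ DX) →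
      EvEq μ₁ μ₂ S u u' := by
    rintro S ⟨q0, hq0, hq0p⟩
    have hT1fin : (insert q0 (TX ∩ S.1)).Finite := (hTXfin.inter_of_left _).insert q0
    have hT1ne : (insert q0 (TX ∩ S.1)).Nonempty := ⟨q0, Set.mem_insert _ _⟩
    have hT1S : insert q0 (TX ∩ S.1) ⊆ S.1 := by
      rintro z hz
      rcases Set.mem_insert_iff.mp hz with rfl | hz
      · exact hq0
      · exact hz.2
    obtain ⟨m, hm, hmax⟩ := exists_max_of_finite hT1fin hT1ne
    obtain ⟨q, hq, hmq⟩ := S.2.2.2 m (hT1S hm)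
    refine ⟨q, hq, fun x hx hqx => ?_⟩
    have hxgt : ∀ z ∈ insert q0 (TX ∩ S.1), z < x :=
      fun z hz => lt_of_le_of_lt (hmax z hz) (lt_trans hmq hqx)
    have hx0 : x ∉ DX := hq0p x hx (hxgt q0 (Set.mem_insert _ _))
    have hxTX : x ∉ TX := by
      intro hxx
      exact absurd (hxgt x (Set.mem_insert_of_mem _ ⟨hxx, hx⟩)) (lt_irrefl x)
    obtain ⟨e1, e2⟩ := hFSeq (IMt.pt x) hxTX
    rw [Hhat_pt] at e1 e2
    rw [← e1, ← e2]
    exact not_not.mp (fun hc => hx0 hc)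
  set D := {p : IMt μ₁ μ₂ | c p ≠ c' p} with hDdef
  by_cases hDXmax : ∃ xm, xm ∈ DX ∧ ∀ x ∈ DX, x ≤ xm
  · -- DX has a maximum
    obtain ⟨xm, hxmD, hxmMax⟩ := hDXmax
    set E := D ∩ {p | (IMt.pt xm : IMt μ₁ μ₂) < p} with hEdef
    have hEsub : E ⊆ FS := by
      rintro p ⟨hpD, hpgt⟩
      by_contra hpFS
      obtain ⟨e1, e2⟩ := hFSeq p hpFS
      match p with
      | .pt x =>
        have hx : x ∈ DX := hpD
        exact absurd ((imlt_pt_pt μ₁ μ₂).mp hpgt) (not_lt.mpr (hxmMax x hx))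
      | .kp S g n =>
        have hxmS : xm ∈ S.1 := (imlt_pt_kp μ₁ μ₂).mp hpgt
        have hEv : EvEq μ₁ μ₂ S u u' := by
          refine key S ⟨xm, hxmS, fun x _ hgt hxDX => ?_⟩
          exact absurd hgt (not_lt.mpr (hxmMax x hxDX))
        refine hpD ?_
        rw [e1, e2, Hhat_kp, Hhat_kp]
        exact Kval_congr μ₁ μ₂ hEv g
    have hEfin : E.Finite := hFSfin.subset hEsub
    rcases E.eq_empty_or_nonempty with hEe | hEne
    · refine ⟨.pt xm, Or.inr ⟨hxmD, fun j hj => ?_⟩⟩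
      by_contra hc
      exact absurd (hEe ▸ (⟨hc, hj⟩ : j ∈ E)) (Set.notMem_empty j)
    · obtain ⟨m, hmE, hmax⟩ := exists_max_of_finite hEfin hEne
      refine ⟨m, Or.inr ⟨hmE.1, fun j hj => ?_⟩⟩
      by_contra hc
      have hjE : j ∈ E := ⟨hc, lt_trans hmE.2 hj⟩
      exact absurd hj (not_lt.mpr (hmax j hjE))
  · rcases Set.eq_empty_or_nonempty DX with hDXe | hDXne
    · -- no X-point differences at all: D is finite
      have hDsub : D ⊆ FS := by
        intro p hpD
        by_contra hpFS
        obtain ⟨e1, e2⟩ := hFSeq p hpFS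
        match p with
        | .pt x =>
          exact absurd (hDXe ▸ (hpD : x ∈ DX)) (Set.notMem_empty x)
        | .kp S g n =>
          have hEv : EvEq μ₁ μ₂ S u u' := by
            refine key S ⟨S.2.1.choose, S.2.1.choose_spec, fun x _ _ hxDX => ?_⟩
            exact absurd (hDXe ▸ hxDX) (Set.notMem_empty x)
          refine hpD ?_
          rw [e1, e2, Hhat_kp, Hhat_kp]
          exact Kval_congr μ₁ μ₂ hEv g
      have hDne : D.Nonempty := by
        rcases Set.eq_empty_or_nonempty D with hDe | h
        · exfalso
          apply hcc
          funext p
          by_contra hc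
          exact absurd (hDe ▸ (hc : p ∈ D)) (Set.notMem_empty p)
        · exact h
      obtain ⟨m, hmD, hmax⟩ := exists_max_of_finite (hFSfin.subset hDsub) hDne
      refine ⟨m, Or.inr ⟨hmD, fun j hj => ?_⟩⟩
      by_contra hc
      exact absurd hj (not_lt.mpr (hmax j hc))
    · -- DX nonempty without maximum: use a κ-point at the cut generated by DX
      have noMax : ∀ x ∈ DX, ∃ x' ∈ DX, x < x' := by
        intro x hx
        by_contra hc
        push_neg at hc
        exact hDXmax ⟨x, hx, fun x' hx' => hc x' hx'⟩
      set Sstar : CutS μ₁ μ₂ := ⟨{z | ∃ x ∈ DX, z ≤ x},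
        ⟨hDXne.choose, hDXne.choose, hDXne.choose_spec, le_rfl⟩,
        by
          rintro z w ⟨x, hx, hwx⟩ hzw
          exact ⟨x, hx, le_trans hzw hwx⟩,
        by
          rintro z ⟨x, hx, hzx⟩
          obtain ⟨x', hx', hxx'⟩ := noMax x hx
          exact ⟨x', ⟨x', hx', le_rfl⟩, lt_of_le_of_lt hzx hxx'⟩⟩ with hSdef
      have hDXS : ∀ x ∈ DX, x ∈ Sstar.1 := fun x hx => ⟨x, hx, le_rfl⟩
      have hNE : ¬ EvEq μ₁ μ₂ Sstar u u' := by
        rintro ⟨q, hq, hqp⟩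
        have hinf : (DX ∩ {z | q < z}).Infinite := by
          intro hfin
          have hne : (DX ∩ {z | q < z}).Nonempty := by
            obtain ⟨x1, hx1, hqx1⟩ := hq
            obtain ⟨x2, hx2, hx12⟩ := noMax x1 hx1
            exact ⟨x2, hx2, lt_of_le_of_lt hqx1 hx12⟩
          obtain ⟨m, hm, hmax⟩ := exists_max_of_finite hfin hne
          refine hDXmax ⟨m, hm.1, fun x hx => ?_⟩
          rcases le_or_gt x q with h | h
          · exact le_trans h (le_of_lt hm.2)
          · exact hmax x ⟨hx, h⟩
        obtain ⟨x, hx⟩ := (hinf.diff hTXfin).nonempty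
        obtain ⟨⟨hxDX, hxq⟩, hxTX⟩ := hx
        obtain ⟨e1, e2⟩ := hFSeq (IMt.pt x) hxTX
        rw [Hhat_pt] at e1 e2
        refine hxDX ?_
        rw [e1, e2, hqp x (hDXS x hxDX) hxq]
      have hb12 : grep μ₁ μ₂ Sstar u ≠ grep μ₁ μ₂ Sstar u' :=
        fun h => hNE (evEq_of_grep_eq μ₁ μ₂ h)
      have hnboth : ¬ (EvEq μ₁ μ₂ Sstar u (botf μ₁ μ₂) ∧
          EvEq μ₁ μ₂ Sstar u' (botf μ₁ μ₂)) := by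
        rintro ⟨h1, h2⟩
        exact hNE (EvEq.trans' μ₁ μ₂ h1 (EvEq.symm' μ₁ μ₂ h2))
      have hmarkex : ∃ v : Yt μ₁ μ₂, v ≠ ⊥ := by
        obtain ⟨x0, hx0⟩ := hDXne
        by_contra hno
        push_neg at hno
        exact hx0 (by rw [hno (c (.pt x0)), hno (c' (.pt x0))])
      set β := if EvEq μ₁ μ₂ Sstar u (botf μ₁ μ₂) then grep μ₁ μ₂ Sstar u'
        else grep μ₁ μ₂ Sstar u with hβdef
      have hKdiff : Kval μ₁ μ₂ Sstar β u ≠ Kval μ₁ μ₂ Sstar β u' := by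
        by_cases hbu : EvEq μ₁ μ₂ Sstar u (botf μ₁ μ₂)
        · have hβ : β = grep μ₁ μ₂ Sstar u' := by rw [hβdef, if_pos hbu]
          have h1 : Kval μ₁ μ₂ Sstar β u = ⊥ := by
            rw [Kval, if_neg (fun hcond => hcond.2 hbu)]
          have h2 : Kval μ₁ μ₂ Sstar β u' = mark μ₁ μ₂ := by
            rw [Kval, if_pos ⟨hβ.symm, fun hbu' => hnboth ⟨hbu, hbu'⟩⟩]
          rw [h1, h2]
          exact fun hc => mark_ne μ₁ μ₂ hmarkex hc.symm
        · have hβ : β = grep μ₁ μ₂ Sstar u := by rw [hβdef, if_neg hbu]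
          have h1 : Kval μ₁ μ₂ Sstar β u = mark μ₁ μ₂ := by
            rw [Kval, if_pos ⟨hβ.symm, hbu⟩]
          have h2 : Kval μ₁ μ₂ Sstar β u' = ⊥ := by
            rw [Kval, if_neg ?_]
            rintro ⟨hrep, _⟩
            exact hb12 (by rw [hβ] at hrep; rw [hrep])
          rw [h1, h2]
          exact mark_ne μ₁ μ₂ hmarkex
      set ABOVE := {p : IMt μ₁ μ₂ | ∀ x ∈ DX, (IMt.pt x : IMt μ₁ μ₂) < p} with hAdef
      set E' := D ∩ ABOVE with hE'def
      have hchar : ∀ p ∈ E', p ∉ FS →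
          ∃ n, p = IMt.kp Sstar (grep μ₁ μ₂ Sstar u) n ∨
            p = IMt.kp Sstar (grep μ₁ μ₂ Sstar u') n := by
        rintro p ⟨hpD, hpA⟩ hpFS
        obtain ⟨e1, e2⟩ := hFSeq p hpFS
        match p with
        | .pt x =>
          exact absurd (hpA x hpD) (lt_irrefl _)
        | .kp S g n =>
          have hDXsub : ∀ x ∈ DX, x ∈ S.1 := fun x hx => (imlt_pt_kp μ₁ μ₂).mp (hpA x hx)
          have hSs : Sstar.1 ⊆ S.1 := by
            rintro z ⟨x, hx, hzx⟩
            exact S.2.2.1 (hDXsub x hx) hzx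
          by_cases hSe : S = Sstar
          · have hgor : g = grep μ₁ μ₂ Sstar u ∨ g = grep μ₁ μ₂ Sstar u' := by
              by_contra hng
              push_neg at hng
              refine hpD ?_
              rw [e1, e2, Hhat_kp, Hhat_kp, hSe, Kval, Kval,
                if_neg (fun hcond => hng.1 hcond.1.symm),
                if_neg (fun hcond => hng.2 hcond.1.symm)]
            rcases hgor with hg | hg
            · exact ⟨n, Or.inl (by rw [hg, hSe])⟩
            · exact ⟨n, Or.inr (by rw [hg, hSe])⟩
          · have hnsub : ¬ S.1 ⊆ Sstar.1 :=
              fun hsub => hSe (Subtype.ext (Set.Subset.antisymm hsub hSs))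
            obtain ⟨x0, hx0S, hx0n⟩ := Set.not_subset.mp hnsub
            have hEv : EvEq μ₁ μ₂ S u u' := by
              refine key S ⟨x0, hx0S, fun x _ hgt hxDX => ?_⟩
              exact absurd hgt (not_lt.mpr (le_of_lt (cut_lt μ₁ μ₂ (hDXS x hxDX) hx0n)))
            refine absurd ?_ hpD
            rw [e1, e2, Hhat_kp, Hhat_kp]
            exact Kval_congr μ₁ μ₂ hEv g
      have hkpA : ∀ g n, (IMt.kp Sstar g n : IMt μ₁ μ₂) ∈ ABOVE :=
        fun g n x hx => (imlt_pt_kp μ₁ μ₂).mpr (hDXS x hx)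
      have hprojfin : {n : ℕ | (IMt.kp Sstar β n : IMt μ₁ μ₂) ∈ FS}.Finite := by
        have : {n : ℕ | (IMt.kp Sstar β n : IMt μ₁ μ₂) ∈ FS} =
            (fun n : ℕ => (IMt.kp Sstar β n : IMt μ₁ μ₂)) ⁻¹' FS := rfl
        rw [this]
        exact hFSfin.preimage (Set.injOn_of_injective (fun a b h => by injection h))
      have hEne' : E'.Nonempty := by
        obtain ⟨n0, hn0⟩ := hprojfin.infinite_compl.nonempty
        obtain ⟨e1, e2⟩ := hFSeq (IMt.kp Sstar β n0) hn0
        refine ⟨IMt.kp Sstar β n0, ?_, hkpA β n0⟩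
        show c _ ≠ c' _
        rw [e1, e2, Hhat_kp, Hhat_kp]
        exact hKdiff
      set chain1 := {n : ℕ | (IMt.kp Sstar (grep μ₁ μ₂ Sstar u) n : IMt μ₁ μ₂) ∈ E'}
        with hch1def
      set chain2 := {n : ℕ | (IMt.kp Sstar (grep μ₁ μ₂ Sstar u') n : IMt μ₁ μ₂) ∈ E'}
        with hch2def
      set cands := ((E' ∩ FS) ∪
        {p | ∃ _ : chain1.Nonempty, p = IMt.kp Sstar (grep μ₁ μ₂ Sstar u) (sInf chain1)} ∪
        {p | ∃ _ : chain2.Nonempty, p = IMt.kp Sstar (grep μ₁ μ₂ Sstar u') (sInf chain2)} :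
        Set (IMt μ₁ μ₂)) with hcdef
      have hcfin : cands.Finite := by
        rw [hcdef]
        refine (((hFSfin.subset (Set.inter_subset_right)).union ?_).union ?_)
        · refine (Set.finite_singleton (IMt.kp Sstar (grep μ₁ μ₂ Sstar u) (sInf chain1))).subset ?_
          rintro p ⟨_, rfl⟩
          exact rfl
        · refine (Set.finite_singleton (IMt.kp Sstar (grep μ₁ μ₂ Sstar u') (sInf chain2))).subset ?_
          rintro p ⟨_, rfl⟩
          exact rfl
      have hcsub : cands ⊆ E' := by
        rintro p ((hp | ⟨hne, rfl⟩) | ⟨hne, rfl⟩)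
        · exact hp.1
        · exact Nat.sInf_mem hne
        · exact Nat.sInf_mem hne
      have hcne : cands.Nonempty := by
        obtain ⟨p, hp⟩ := hEne'
        by_cases hpFS : p ∈ FS
        · exact ⟨p, Or.inl (Or.inl ⟨hp, hpFS⟩)⟩
        · obtain ⟨n, hn | hn⟩ := hchar p hp hpFS
          · refine ⟨IMt.kp Sstar (grep μ₁ μ₂ Sstar u) (sInf chain1),
              Or.inl (Or.inr ⟨⟨n, show _ ∈ E' by rw [← hn]; exact hp⟩, rfl⟩)⟩
          · exact ⟨IMt.kp Sstar (grep μ₁ μ₂ Sstar u') (sInf chain2),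
              Or.inr ⟨⟨n, show _ ∈ E' by rw [← hn]; exact hp⟩, rfl⟩⟩
      obtain ⟨d, hdc, hdmax⟩ := exists_max_of_finite hcfin hcne
      have hdE' : d ∈ E' := hcsub hdc
      have hdom : ∀ p ∈ E', p ≤ d := by
        intro p hp
        by_cases hpFS : p ∈ FS
        · exact hdmax p (Or.inl (Or.inl ⟨hp, hpFS⟩))
        · obtain ⟨n, hn | hn⟩ := hchar p hp hpFS
          · have hmem : n ∈ chain1 := show _ ∈ E' by rw [← hn]; exact hp
            refine le_trans ?_ (hdmax _ (Or.inl (Or.inr ⟨⟨n, hmem⟩, rfl⟩)))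
            rw [hn]
            exact Or.inr ⟨rfl, Or.inr ⟨rfl, Nat.sInf_le hmem⟩⟩
          · have hmem : n ∈ chain2 := show _ ∈ E' by rw [← hn]; exact hp
            refine le_trans ?_ (hdmax _ (Or.inr ⟨⟨n, hmem⟩, rfl⟩))
            rw [hn]
            exact Or.inr ⟨rfl, Or.inr ⟨rfl, Nat.sInf_le hmem⟩⟩
      refine ⟨d, Or.inr ⟨hdE'.1, fun j hj => ?_⟩⟩
      by_contra hc
      have hjE' : j ∈ E' := ⟨hc, fun x hx => lt_trans (hdE'.2 x hx) hj⟩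
      exact absurd hj (not_lt.mpr (hdom j hjE'))

/-! ### The amalgamated FunARD structure and the two embeddings -/

noncomputable def Mstr : FunARD.{max u v, v} where
  I := IMt μ₁ μ₂
  linOrdI := inferInstance
  zeroI := inferInstance
  E := Yt μ₁ μ₂
  botE := inferInstance
  A := AM μ₁ μ₂
  posSupport := AM_posSupport μ₁ μ₂
  eps_mem := AM_eps μ₁ μ₂
  wr_mem := AM_wr μ₁ μ₂
  diff_total := AM_diff μ₁ μ₂

theorem Hhat_self_mem₁ {b : S₁.I → S₁.E} (hb : b ∈ S₁.A) :
    Hhat μ₁ μ₂ (H1 μ₁ μ₂ b) ∈ AM μ₁ μ₂ := by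
  refine ⟨H1 μ₁ μ₂ b, Or.inl ⟨b, hb, rfl⟩, ?_, fun p hp => absurd rfl hp⟩
  refine Set.finite_empty.subset ?_
  intro p hp
  exact absurd rfl hp

theorem Hhat_self_mem₂ {b : S₂.I → S₂.E} (hb : b ∈ S₂.A) :
    Hhat μ₁ μ₂ (H2 μ₁ μ₂ b) ∈ AM μ₁ μ₂ := by
  refine ⟨H2 μ₁ μ₂ b, Or.inr ⟨b, hb, rfl⟩, ?_, fun p hp => absurd rfl hp⟩
  refine Set.finite_empty.subset ?_
  intro p hp
  exact absurd rfl hp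

theorem Hhat_congr_fin {u u' : Xt μ₁ μ₂ → Yt μ₁ μ₂}
    (hfin : {x | u x ≠ u' x}.Finite) {S : CutS μ₁ μ₂} (g : Xt μ₁ μ₂ → Yt μ₁ μ₂) :
    Kval μ₁ μ₂ S g u = Kval μ₁ μ₂ S g u' :=
  Kval_congr μ₁ μ₂ (germ_fin μ₁ μ₂ S hfin) g

/-- Embedding-level write commutation for side 1. -/
theorem nu1_wr (b : S₁.I → S₁.E) (i : S₁.I) (e : S₁.E) :
    Hhat μ₁ μ₂ (H1 μ₁ μ₂ (wr b i e)) =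
      wr (Hhat μ₁ μ₂ (H1 μ₁ μ₂ b)) (.pt (.pt i)) (Sum.inl e) := by
  funext p
  rw [H1_wr μ₁ μ₂ b i e]
  match p with
  | .pt q =>
    rw [Hhat_pt]; erw [wr_apply, wr_apply]
    by_cases h0 : (0 : S₁.I) ≤ i
    · rw [if_pos ((zero_le_pt_iff μ₁ μ₂).mpr h0),
        if_pos (show (0 : IMt μ₁ μ₂) ≤ .pt (.pt i) from (zero_le_pt_iff μ₁ μ₂).mpr h0)]
      by_cases hq : q = Xt.pt i
      · erw [if_pos hq, if_pos (by rw [hq])]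
      · erw [if_neg hq, if_neg (fun hc => hq (by injection hc))]; rw [Hhat_pt]
    · rw [if_neg (fun hc => h0 ((zero_le_pt_iff μ₁ μ₂).mp hc)),
        if_neg (fun hc => h0 ((zero_le_pt_iff μ₁ μ₂).mp ((zero_le_ptpt_iff μ₁ μ₂).mp hc))),
        Hhat_pt]
  | .kp S g n =>
    rw [Hhat_kp]; erw [wr_apply]
    have h1 : Kval μ₁ μ₂ S g (wr (H1 μ₁ μ₂ b) (.pt i) (Sum.inl e)) =
        Kval μ₁ μ₂ S g (H1 μ₁ μ₂ b) :=
      Hhat_congr_fin μ₁ μ₂ (wr_diff_finite _ _ _) g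
    rw [h1]
    by_cases h0 : (0 : IMt μ₁ μ₂) ≤ .pt (.pt i)
    · erw [if_pos h0, if_neg (show (IMt.kp S g n : IMt μ₁ μ₂) ≠ .pt (.pt i) by intro hc; cases hc)]; rw [Hhat_kp]
    · rw [if_neg h0, Hhat_kp]

/-- Embedding-level write commutation for side 2. -/
theorem nu2_wr (b : S₂.I → S₂.E) (i : S₂.I) (e : S₂.E) :
    Hhat μ₁ μ₂ (H2 μ₁ μ₂ (wr b i e)) =
      wr (Hhat μ₁ μ₂ (H2 μ₁ μ₂ b)) (.pt (F2X μ₁ μ₂ i)) (G2 μ₁ μ₂ e) := by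
  funext p
  rw [H2_wr μ₁ μ₂ b i e]
  match p with
  | .pt q =>
    rw [Hhat_pt, wr_apply, wr_apply]
    by_cases h0 : (0 : S₂.I) ≤ i
    · rw [if_pos ((zero_le_F2X_iff μ₁ μ₂).mpr h0),
        if_pos (show (0 : IMt μ₁ μ₂) ≤ .pt (F2X μ₁ μ₂ i) from (zero_le_F2X_iff μ₁ μ₂).mpr h0)]
      by_cases hq : q = F2X μ₁ μ₂ i
      · rw [if_pos hq, if_pos (by rw [hq])]
      · rw [if_neg hq, if_neg (fun hc => hq (by injection hc)), Hhat_pt]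
    · rw [if_neg (fun hc => h0 ((zero_le_F2X_iff μ₁ μ₂).mp hc)),
        if_neg (fun hc => h0 ((zero_le_F2X_iff μ₁ μ₂).mp ((zero_le_ptpt_iff μ₁ μ₂).mp hc))),
        Hhat_pt]
  | .kp S g n =>
    rw [Hhat_kp, wr_apply]
    have h1 : Kval μ₁ μ₂ S g (wr (H2 μ₁ μ₂ b) (F2X μ₁ μ₂ i) (G2 μ₁ μ₂ e)) =
        Kval μ₁ μ₂ S g (H2 μ₁ μ₂ b) :=
      Hhat_congr_fin μ₁ μ₂ (wr_diff_finite _ _ _) g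
    rw [h1]
    by_cases h0 : (0 : IMt μ₁ μ₂) ≤ .pt (F2X μ₁ μ₂ i)
    · rw [if_pos h0, if_neg (fun hc => by cases hc), Hhat_kp]
    · rw [if_neg h0, Hhat_kp]

theorem nu1_faith {b b' : S₁.I → S₁.E} {d : S₁.I} (hd : IsDiff d b b') :
    IsDiff (IMt.pt (Xt.pt d) : IMt μ₁ μ₂) (Hhat μ₁ μ₂ (H1 μ₁ μ₂ b))
      (Hhat μ₁ μ₂ (H1 μ₁ μ₂ b')) := by
  rcases hd with ⟨heq, hd0⟩ | ⟨hne, hab⟩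
  · subst heq
    exact Or.inl ⟨rfl, by rw [hd0]; rfl⟩
  · refine Or.inr ⟨?_, ?_⟩
    · intro hc
      rw [Hhat_pt, Hhat_pt, H1_pt, H1_pt] at hc
      exact hne (Sum.inl.inj hc)
    · intro j hj
      match j with
      | .pt q =>
        rw [Hhat_pt, Hhat_pt]
        exact H1_above μ₁ μ₂ hab q ((imlt_pt_pt μ₁ μ₂).mp hj)
      | .kp S g n =>
        have hdS : Xt.pt d ∈ S.1 := (imlt_pt_kp μ₁ μ₂).mp hj
        rw [Hhat_kp, Hhat_kp]
        refine Kval_congr μ₁ μ₂ ?_ g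
        obtain ⟨q', hq', hdq'⟩ := S.2.2.2 (Xt.pt d) hdS
        exact ⟨q', hq', fun x hx hq'x => H1_above μ₁ μ₂ hab x (lt_trans hdq' hq'x)⟩

theorem nu2_faith {b b' : S₂.I → S₂.E} {d : S₂.I} (hd : IsDiff d b b') :
    IsDiff (IMt.pt (F2X μ₁ μ₂ d) : IMt μ₁ μ₂) (Hhat μ₁ μ₂ (H2 μ₁ μ₂ b))
      (Hhat μ₁ μ₂ (H2 μ₁ μ₂ b')) := by
  rcases hd with ⟨heq, hd0⟩ | ⟨hne, hab⟩
  · subst heq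
    refine Or.inl ⟨rfl, ?_⟩
    rw [hd0, F2X_zero]
    rfl
  · refine Or.inr ⟨?_, ?_⟩
    · intro hc
      rw [Hhat_pt, Hhat_pt, H2_read, H2_read] at hc
      exact hne (G2_inj μ₁ μ₂ hc)
    · intro j hj
      match j with
      | .pt q =>
        rw [Hhat_pt, Hhat_pt]
        exact H2_above μ₁ μ₂ hab q ((imlt_pt_pt μ₁ μ₂).mp hj)
      | .kp S g n =>
        have hdS : F2X μ₁ μ₂ d ∈ S.1 := (imlt_pt_kp μ₁ μ₂).mp hj
        rw [Hhat_kp, Hhat_kp]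
        refine Kval_congr μ₁ μ₂ ?_ g
        obtain ⟨q', hq', hdq'⟩ := S.2.2.2 (F2X μ₁ μ₂ d) hdS
        exact ⟨q', hq', fun x hx hq'x => H2_above μ₁ μ₂ hab x (lt_trans hdq' hq'x)⟩

noncomputable def nu1 : ARDEmbedding S₁ (Mstr μ₁ μ₂) where
  f := OrderEmbedding.ofMapLEIff (fun x => IMt.pt (Xt.pt x)) (fun _ _ => Iff.rfl)
  map_zero := rfl
  g := Sum.inl
  g_injective := fun _ _ h => Sum.inl.inj h
  map_bot := rfl
  h := fun b => Hhat μ₁ μ₂ (H1 μ₁ μ₂ b)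
  h_mem := fun b hb => Hhat_self_mem₁ μ₁ μ₂ hb
  h_read := fun b _ i => rfl
  h_eps := by
    show Hhat μ₁ μ₂ (H1 μ₁ μ₂ (fun _ => ⊥)) = fun _ => ⊥
    rw [show H1 μ₁ μ₂ (fun _ => ⊥) = botf μ₁ μ₂ from H1_eps μ₁ μ₂, Hhat_botf]
  h_wr := fun b _ i e => nu1_wr μ₁ μ₂ b i e
  diff_faithful := fun b _ b' _ d hd => nu1_faith μ₁ μ₂ hd

noncomputable def nu2 : ARDEmbedding S₂ (Mstr μ₁ μ₂) where
  f := OrderEmbedding.ofMapLEIff (fun i => IMt.pt (F2X μ₁ μ₂ i))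
    (fun i j => Iff.trans (imle_pt_pt μ₁ μ₂) (F2X_le_iff μ₁ μ₂))
  map_zero := by
    show IMt.pt (F2X μ₁ μ₂ 0) = 0
    rw [F2X_zero]
    rfl
  g := G2 μ₁ μ₂
  g_injective := G2_inj μ₁ μ₂
  map_bot := G2_bot μ₁ μ₂
  h := fun b => Hhat μ₁ μ₂ (H2 μ₁ μ₂ b)
  h_mem := fun b hb => Hhat_self_mem₂ μ₁ μ₂ hb
  h_read := fun b _ i => by
    show Hhat μ₁ μ₂ (H2 μ₁ μ₂ b) (.pt (F2X μ₁ μ₂ i)) = G2 μ₁ μ₂ (b i)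
    rw [Hhat_pt, H2_read]
  h_eps := by
    show Hhat μ₁ μ₂ (H2 μ₁ μ₂ (fun _ => ⊥)) = fun _ => ⊥
    rw [show H2 μ₁ μ₂ (fun _ => ⊥) = botf μ₁ μ₂ from H2_eps μ₁ μ₂, Hhat_botf]
  h_wr := fun b _ i e => nu2_wr μ₁ μ₂ b i e
  diff_faithful := fun b _ b' _ d hd => nu2_faith μ₁ μ₂ hd

end Constr



end ARDAmalg

/-- amalgamation for functional ARD-structures over the index theory TO. -/
theorem ard_amalgamation (N S₁ S₂ : FunARD.{u, v})
    (μ₁ : ARDEmbedding N S₁) (μ₂ : ARDEmbedding N S₂) :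
    ∃ (M : FunARD.{max u v, v}) (ν₁ : ARDEmbedding S₁ M) (ν₂ : ARDEmbedding S₂ M),
      (∀ i : N.I, ν₁.f (μ₁.f i) = ν₂.f (μ₂.f i)) ∧
      (∀ e : N.E, ν₁.g (μ₁.g e) = ν₂.g (μ₂.g e)) ∧
      (∀ a ∈ N.A, ν₁.h (μ₁.h a) = ν₂.h (μ₂.h a)) := by
  refine ⟨ARDAmalg.Mstr μ₁ μ₂, ARDAmalg.nu1 μ₁ μ₂, ARDAmalg.nu2 μ₁ μ₂,
    fun i => ?_, fun e => ?_, fun a ha => ?_⟩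
  · show (ARDAmalg.IMt.pt (ARDAmalg.Xt.pt (μ₁.f i)) : ARDAmalg.IMt μ₁ μ₂) =
      ARDAmalg.IMt.pt (ARDAmalg.F2X μ₁ μ₂ (μ₂.f i))
    rw [ARDAmalg.F2X_img]
  · show (Sum.inl (μ₁.g e) : ARDAmalg.Yt μ₁ μ₂) = ARDAmalg.G2 μ₁ μ₂ (μ₂.g e)
    exact (ARDAmalg.G2_img μ₁ μ₂ e).symm
  · show ARDAmalg.Hhat μ₁ μ₂ (ARDAmalg.H1 μ₁ μ₂ (μ₁.h a)) =
      ARDAmalg.Hhat μ₁ μ₂ (ARDAmalg.H2 μ₁ μ₂ (μ₂.h a))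
    exact congrArg _ (ARDAmalg.H_compat μ₁ μ₂ ha)
end

section
/- Definedness of maxdiff for arrays finitely differing from arrays with all iterated maxdiffs: let c₁, c₂, d₁, d₂ : I → E have positive support, suppose the sets {i : I | d₁ i ≠ c₁ i} and {i : I | d₂ i ≠ c₂ i} are finite, and suppose there is a sequence k : ℕ → I such that, defining c⁽¹⁾ := c₂ and c⁽ⁿ⁺¹⁾ := wr c⁽ⁿ⁾ (k n) (c₁ (k n)), we have IsDiff (k n) c₁ c⁽ⁿ⁾ for every n ≥ 1 (i.e. all iterated maxdiffs of c₁ and c₂ exist). Then there exists d : I with IsDiff d d₁ d₂; equivalently, either d₁ = d₂ or the set {i : I | d₁ i ≠ d₂ i} has a greatest element. -/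
/-- if `d₁, d₂` differ at finitely many indices from `c₁, c₂` respectively and all
iterated maxdiffs of `c₁` and `c₂` exist (witnessed by the sequence `k`, here `k n` is the
paper's `diff_{n+1}(c₁,c₂)` and `c n` is the paper's write sequence `c⁽ⁿ⁺¹⁾`, `c 0 = c₂`),
then the maxdiff of `d₁` and `d₂` is defined. -/
theorem isDiff_defined_of_iterated_diffs {I E : Type*} [LinearOrder I] [Zero I] [Bot E]
    (c₁ c₂ d₁ d₂ : I → E)
    (hc₁ : PosSupport c₁) (hc₂ : PosSupport c₂) (hd₁ : PosSupport d₁) (hd₂ : PosSupport d₂)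
    (hfin₁ : {i : I | d₁ i ≠ c₁ i}.Finite) (hfin₂ : {i : I | d₂ i ≠ c₂ i}.Finite)
    (k : ℕ → I) (c : ℕ → I → E) (hc0 : c 0 = c₂)
    (hcs : ∀ n : ℕ, c (n + 1) = wr (c n) (k n) (c₁ (k n)))
    (hdiff : ∀ n : ℕ, IsDiff (k n) c₁ (c n)) :
    ∃ d : I, IsDiff d d₁ d₂ := by
  classical
  by_cases hdd : d₁ = d₂
  · exact ⟨0, Or.inl ⟨hdd, rfl⟩⟩
  -- positive support of all c n
  have hps : ∀ n, PosSupport (c n) := by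
    intro n
    induction n with
    | zero => rw [hc0]; exact hc₂
    | succ n ih =>
      intro i hi
      rw [hcs, wr]
      split
      · next h0 =>
        rw [Function.update_apply]
        rw [if_neg (by rintro rfl; exact absurd h0 (not_le.mpr hi))]
        exact ih i hi
      · exact ih i hi
  -- differences of c n from c₂ are among k 0 .. k (n-1)
  have hL2 : ∀ n j, c n j ≠ c₂ j → ∃ m, m < n ∧ j = k m := by
    intro n
    induction n with
    | zero => intro j h; rw [hc0] at h; exact absurd rfl h
    | succ n ih =>
      intro j h
      rw [hcs, wr] at h
      by_cases h0 : (0:I) ≤ k n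
      · rw [if_pos h0, Function.update_apply] at h
        by_cases hj : j = k n
        · exact ⟨n, Nat.lt_succ_self n, hj⟩
        · rw [if_neg hj] at h
          obtain ⟨m, hm, he⟩ := ih j h
          exact ⟨m, Nat.lt_succ_of_lt hm, he⟩
      · rw [if_neg h0] at h
        obtain ⟨m, hm, he⟩ := ih j h
        exact ⟨m, Nat.lt_succ_of_lt hm, he⟩
  have hag : ∀ n j, k n < j → c₁ j = c n j := by
    intro n j hj
    rcases hdiff n with ⟨he, _⟩ | ⟨_, h⟩
    · rw [he]
    · exact h j hj
  have hL3 : ∀ n j, c₁ j ≠ c₂ j → k n < j → ∃ m, m < n ∧ j = k m := by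
    intro n j h hj
    exact hL2 n j (by rw [← hag n j hj]; exact h)
  set S := {i : I | d₁ i ≠ d₂ i} with hS
  have hSne : S.Nonempty := by
    obtain ⟨s₀, hs₀⟩ := Function.ne_iff.mp hdd
    exact ⟨s₀, hs₀⟩
  by_cases hA : ∃ n, c₁ = c n
  · -- eventually c₁ = c n : finitely many differences overall
    obtain ⟨n, hn⟩ := hA
    have hSfin : S.Finite := by
      apply Set.Finite.subset
        ((hfin₁.union hfin₂).union ((Set.finite_Iio n).image k))
      intro i hi
      by_cases h1 : d₁ i = c₁ i
      · by_cases h2 : d₂ i = c₂ i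
        · right
          have : c₁ i ≠ c₂ i := by
            intro h; exact hi (by rw [h1, h, ← h2])
          obtain ⟨m, hm, he⟩ := hL2 n i (by rw [← hn]; exact this)
          exact ⟨m, hm, he.symm⟩
        · exact Or.inl (Or.inr h2)
      · exact Or.inl (Or.inl h1)
    have hne' : hSfin.toFinset.Nonempty := by
      simpa using hSne
    refine ⟨hSfin.toFinset.max' hne', Or.inr ⟨?_, ?_⟩⟩
    · have := hSfin.toFinset.max'_mem hne'
      exact (Set.Finite.mem_toFinset _).mp this
    · intro j hj
      by_contra h
      exact absurd (Finset.le_max' _ j (by rw [Set.Finite.mem_toFinset]; exact h)) (not_le.mpr hj)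
  · push_neg at hA
    have hd2 : ∀ n, c₁ (k n) ≠ c n (k n) ∧ ∀ j, k n < j → c₁ j = c n j := by
      intro n
      rcases hdiff n with ⟨he, _⟩ | h
      · exact absurd he (hA n)
      · exact h
    have hk0 : ∀ n, (0:I) ≤ k n := by
      intro n
      by_contra h
      push_neg at h
      exact (hd2 n).1 (by rw [hc₁ _ h, hps n _ h])
    have hkdec : ∀ n, k (n + 1) < k n := by
      intro n
      by_contra h
      push_neg at h
      apply (hd2 (n + 1)).1
      rcases eq_or_lt_of_le h with he | hlt
      · rw [hcs, wr, if_pos (hk0 n), ← he, Function.update_self]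
      · rw [hcs, wr, if_pos (hk0 n), Function.update_apply,
          if_neg (ne_of_gt hlt)]
        exact (hd2 n).2 _ hlt
    have hanti : StrictAnti k := strictAnti_nat_of_succ_lt hkdec
    have hcn2 : ∀ n, c n (k n) = c₂ (k n) := by
      intro n
      by_contra h
      obtain ⟨m, hm, he⟩ := hL2 n _ h
      exact absurd he (ne_of_lt (hanti hm))
    have hc12 : ∀ n, c₁ (k n) ≠ c₂ (k n) := by
      intro n h
      exact (hd2 n).1 (by rw [h, hcn2 n])
    -- some k m lies in S
    have hex : ∃ m, d₁ (k m) ≠ d₂ (k m) := by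
      have hfin : {m : ℕ | k m ∈ {i : I | d₁ i ≠ c₁ i} ∪ {i : I | d₂ i ≠ c₂ i}}.Finite :=
        Set.Finite.preimage (Set.injOn_of_injective hanti.injective)
          (hfin₁.union hfin₂)
      obtain ⟨m, hm⟩ := hfin.infinite_compl.nonempty
      simp only [Set.mem_compl_iff, Set.mem_setOf_eq, Set.mem_union, not_or, not_not] at hm
      exact ⟨m, by rw [hm.1, hm.2]; exact hc12 m⟩
    set m₀ := Nat.find hex with hm₀
    have hkm₀S : k m₀ ∈ S := Nat.find_spec hex
    -- the finite candidate set
    have hTfin : (insert (k m₀) (S ∩ ({i : I | d₁ i ≠ c₁ i} ∪ {i : I | d₂ i ≠ c₂ i}))).Finite :=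
      Set.Finite.insert _ (Set.Finite.inter_of_right (hfin₁.union hfin₂) S)
    have hTne : hTfin.toFinset.Nonempty := by
      refine ⟨k m₀, ?_⟩
      simp
    set M := hTfin.toFinset.max' hTne with hMdef
    have hMS : M ∈ S := by
      have hMmem := hTfin.toFinset.max'_mem hTne
      rw [Set.Finite.mem_toFinset] at hMmem
      rcases hMmem with h | h
      · show hTfin.toFinset.max' hTne ∈ S
        rw [h]; exact hkm₀S
      · exact h.1
    have hkm₀M : k m₀ ≤ M := Finset.le_max' _ _ (by simp)
    have hub : ∀ s, s ∈ S → s ≤ M := by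
      intro s hs
      by_cases hF : d₁ s = c₁ s ∧ d₂ s = c₂ s
      · -- then c₁ s ≠ c₂ s
        have hc : c₁ s ≠ c₂ s := by
          intro h; exact hs (by rw [hF.1, h, ← hF.2])
        by_cases hr : ∃ m, s = k m
        · obtain ⟨m, rfl⟩ := hr
          have : m₀ ≤ m := Nat.find_min' hex hs
          exact le_trans (hanti.antitone this) hkm₀M
        · push_neg at hr
          by_contra hlt
          push_neg at hlt
          have : k m₀ < s := lt_of_le_of_lt hkm₀M hlt
          obtain ⟨m, _, he⟩ := hL3 m₀ s hc this
          exact hr m he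
      · apply Finset.le_max'
        rw [Set.Finite.mem_toFinset]
        right
        refine ⟨hs, ?_⟩
        by_cases h1 : d₁ s = c₁ s
        · exact Or.inr fun h2 => hF ⟨h1, h2⟩
        · exact Or.inl h1
    refine ⟨M, Or.inr ⟨hMS, ?_⟩⟩
    intro j hj
    by_contra h
    exact absurd (hub j h) (not_le.mpr hj)
end
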